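/- arXiv:1911.05559 — 7 statements merged into one kernel-verified Lean document; each statement's English description precedes it below -/
import Mathlib

section
/- For each odd positive integer d = 2r+1, the coefficients c_k = (1/4)^{r-k} · Σ_{j=k}^{r} C(2r+1, 2j)·C(j, k) satisfy c_k = (2r+1)(2r-k)! / (k!(2r+1-2k)!) for 0 ≤ k ≤ r. -/
open Finset

def SS (r k : ℕ) : ℚ := ∑ j ∈ range (r+1), (((2*r+1).choose (2*j) * j.choose k : ℕ) : ℚ)
def TT (r k : ℕ) : ℚ := ∑ j ∈ range (r+1), (((2*r+1).choose (2*j+1) * j.choose k : ℕ) : ℚ)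

lemma SS_zero (r k : ℕ) (h : r < k) : SS r k = 0 := by
  refine Finset.sum_eq_zero fun j hj => ?_
  simp only [mem_range] at hj
  have : j.choose k = 0 := Nat.choose_eq_zero_of_lt (by omega)
  simp [this]

lemma TT_zero (r k : ℕ) (h : r < k) : TT r k = 0 := by
  refine Finset.sum_eq_zero fun j hj => ?_
  simp only [mem_range] at hj
  have : j.choose k = 0 := Nat.choose_eq_zero_of_lt (by omega)
  simp [this]

lemma two_step (n j : ℕ) :
    (n+2).choose (j+2) = n.choose j + 2*(n.choose (j+1)) + n.choose (j+2) := by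
  rw [show n+2 = (n+1)+1 from rfl, show j+2 = (j+1)+1 from rfl,
    Nat.choose_succ_succ (n+1) (j+1), Nat.choose_succ_succ n j, Nat.choose_succ_succ n (j+1)]
  ring

lemma choose_even_split (r i : ℕ) :
    (2*(r+1)+1).choose (2*(i+1)) =
      (2*r+1).choose (2*i) + 2*((2*r+1).choose (2*i+1)) + (2*r+1).choose (2*(i+1)) := by
  rw [show 2*(r+1)+1 = (2*r+1)+2 by omega, show 2*(i+1) = 2*i+2 by omega]
  rw [two_step (2*r+1) (2*i)]

lemma choose_odd_split (r i : ℕ) :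
    (2*(r+1)+1).choose (2*(i+1)+1) =
      (2*r+1).choose (2*i+1) + 2*((2*r+1).choose (2*(i+1))) + (2*r+1).choose (2*(i+1)+1) := by
  rw [show 2*(r+1)+1 = (2*r+1)+2 by omega, show 2*(i+1)+1 = (2*i+1)+2 by omega]
  rw [two_step (2*r+1) (2*i+1), show 2*i+1+1 = 2*(i+1) by omega, show 2*i+1+2 = 2*(i+1)+1 by omega]


lemma shiftS (r c : ℕ) :
    ∑ i ∈ range (r+1), (((2*r+1).choose (2*(i+1)) * (i+1).choose c : ℕ) : ℚ)
      = SS r c - ((0).choose c : ℚ) := by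
  have e1 := Finset.sum_range_succ' (fun j => (((2*r+1).choose (2*j) * j.choose c : ℕ) : ℚ)) (r+1)
  have e2 := Finset.sum_range_succ (fun j => (((2*r+1).choose (2*j) * j.choose c : ℕ) : ℚ)) (r+1)
  have hz : (2*r+1).choose (2*(r+1)) = 0 := Nat.choose_eq_zero_of_lt (by omega)
  simp only [hz, Nat.zero_mul, Nat.cast_zero, add_zero] at e2
  have g0 : (((2*r+1).choose (2*0) * (0).choose c : ℕ) : ℚ) = ((0).choose c : ℚ) := by
    norm_num
  rw [g0] at e1
  unfold SS
  rw [e2] at e1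
  linarith [e1]

lemma shiftT (r c : ℕ) :
    ∑ i ∈ range (r+1), (((2*r+1).choose (2*(i+1)+1) * (i+1).choose c : ℕ) : ℚ)
      = TT r c - ((2*r+1) * (0).choose c : ℚ) := by
  have e1 := Finset.sum_range_succ' (fun j => (((2*r+1).choose (2*j+1) * j.choose c : ℕ) : ℚ)) (r+1)
  have e2 := Finset.sum_range_succ (fun j => (((2*r+1).choose (2*j+1) * j.choose c : ℕ) : ℚ)) (r+1)
  have hz : (2*r+1).choose (2*(r+1)+1) = 0 := Nat.choose_eq_zero_of_lt (by omega)
  simp only [hz, Nat.zero_mul, Nat.cast_zero, add_zero] at e2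
  have g0 : (((2*r+1).choose (2*0+1) * (0).choose c : ℕ) : ℚ) = ((2*r+1) * (0).choose c : ℚ) := by
    norm_num [Nat.choose_one_right]
  rw [g0] at e1
  unfold TT
  rw [e2] at e1
  linarith [e1]

lemma Srec (r m : ℕ) :
    SS (r+1) (m+1) = 2*SS r (m+1) + SS r m + 2*TT r (m+1) + 2*TT r m := by
  have key : ∀ i : ℕ, (((2*(r+1)+1).choose (2*(i+1)) * (i+1).choose (m+1) : ℕ) : ℚ)
      = ((((2*r+1).choose (2*i) * i.choose m : ℕ) : ℚ)
        + (((2*r+1).choose (2*i) * i.choose (m+1) : ℕ) : ℚ)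
        + 2 * (((2*r+1).choose (2*i+1) * i.choose m : ℕ) : ℚ)
        + 2 * (((2*r+1).choose (2*i+1) * i.choose (m+1) : ℕ) : ℚ))
        + (((2*r+1).choose (2*(i+1)) * (i+1).choose (m+1) : ℕ) : ℚ) := by
    intro i
    rw [choose_even_split, Nat.choose_succ_succ i m]
    push_cast
    ring
  show (∑ j ∈ range (r+1+1), (((2*(r+1)+1).choose (2*j) * j.choose (m+1) : ℕ) : ℚ)) = _
  rw [Finset.sum_range_succ']
  simp only [key]
  rw [Finset.sum_add_distrib, shiftS r (m+1)]
  simp only [Finset.sum_add_distrib, ← Finset.mul_sum]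
  have f0 : (((2*(r+1)+1).choose (2*0) * (0).choose (m+1) : ℕ) : ℚ) = 0 := by
    norm_num
  rw [f0]
  have c0 : ((0).choose (m+1) : ℚ) = 0 := by norm_num
  rw [c0]
  unfold SS TT
  ring

lemma Trec (r m : ℕ) :
    TT (r+1) (m+1) = 2*TT r (m+1) + TT r m + 2*SS r (m+1) := by
  have key : ∀ i : ℕ, (((2*(r+1)+1).choose (2*(i+1)+1) * (i+1).choose (m+1) : ℕ) : ℚ)
      = ((((2*r+1).choose (2*i+1) * i.choose m : ℕ) : ℚ)
        + (((2*r+1).choose (2*i+1) * i.choose (m+1) : ℕ) : ℚ))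
        + 2 * (((2*r+1).choose (2*(i+1)) * (i+1).choose (m+1) : ℕ) : ℚ)
        + (((2*r+1).choose (2*(i+1)+1) * (i+1).choose (m+1) : ℕ) : ℚ) := by
    intro i
    rw [choose_odd_split, Nat.choose_succ_succ i m]
    push_cast
    ring
  show (∑ j ∈ range (r+1+1), (((2*(r+1)+1).choose (2*j+1) * j.choose (m+1) : ℕ) : ℚ)) = _
  rw [Finset.sum_range_succ']
  simp only [key]
  rw [Finset.sum_add_distrib, Finset.sum_add_distrib, ← Finset.mul_sum, shiftS r (m+1),
    shiftT r (m+1)]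
  have f0 : (((2*(r+1)+1).choose (2*0+1) * (0).choose (m+1) : ℕ) : ℚ) = 0 := by
    norm_num
  rw [f0]
  have c0 : ((0).choose (m+1) : ℚ) = 0 := by norm_num
  rw [c0, Finset.sum_add_distrib]
  unfold SS TT
  ring

lemma Srec0 (r : ℕ) : SS (r+1) 0 = 2*SS r 0 + 2*TT r 0 := by
  have key : ∀ i : ℕ, (((2*(r+1)+1).choose (2*(i+1)) * (i+1).choose 0 : ℕ) : ℚ)
      = ((((2*r+1).choose (2*i) * i.choose 0 : ℕ) : ℚ)
        + 2 * (((2*r+1).choose (2*i+1) * i.choose 0 : ℕ) : ℚ))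
        + (((2*r+1).choose (2*(i+1)) * (i+1).choose 0 : ℕ) : ℚ) := by
    intro i
    rw [choose_even_split]
    simp only [Nat.choose_zero_right]
    push_cast
    ring
  show (∑ j ∈ range (r+1+1), (((2*(r+1)+1).choose (2*j) * j.choose 0 : ℕ) : ℚ)) = _
  rw [Finset.sum_range_succ']
  simp only [key]
  rw [Finset.sum_add_distrib, shiftS r 0]
  simp only [Finset.sum_add_distrib, ← Finset.mul_sum]
  have f0 : (((2*(r+1)+1).choose (2*0) * (0).choose 0 : ℕ) : ℚ) = 1 := by
    norm_num
  rw [f0]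
  have c0 : ((0).choose 0 : ℚ) = 1 := by norm_num
  rw [c0]
  unfold SS TT
  ring

lemma Trec0 (r : ℕ) : TT (r+1) 0 = 2*TT r 0 + 2*SS r 0 := by
  have key : ∀ i : ℕ, (((2*(r+1)+1).choose (2*(i+1)+1) * (i+1).choose 0 : ℕ) : ℚ)
      = (((2*r+1).choose (2*i+1) * i.choose 0 : ℕ) : ℚ)
        + 2 * (((2*r+1).choose (2*(i+1)) * (i+1).choose 0 : ℕ) : ℚ)
        + (((2*r+1).choose (2*(i+1)+1) * (i+1).choose 0 : ℕ) : ℚ) := by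
    intro i
    rw [choose_odd_split]
    simp only [Nat.choose_zero_right]
    push_cast
    ring
  show (∑ j ∈ range (r+1+1), (((2*(r+1)+1).choose (2*j+1) * j.choose 0 : ℕ) : ℚ)) = _
  rw [Finset.sum_range_succ']
  simp only [key]
  rw [Finset.sum_add_distrib, Finset.sum_add_distrib, ← Finset.mul_sum, shiftS r 0, shiftT r 0]
  have f0 : (((2*(r+1)+1).choose (2*0+1) * (0).choose 0 : ℕ) : ℚ) = 2*(r+1)+1 := by
    norm_num [Nat.choose_one_right]
  rw [f0]
  have c0 : ((0).choose 0 : ℚ) = 1 := by norm_num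
  rw [c0]
  unfold SS TT
  push_cast
  ring

def sig (k d : ℕ) : ℚ :=
  4^d * (2*k+2*d+1) * ((k+2*d).factorial : ℚ) / ((k.factorial : ℚ) * ((2*d+1).factorial : ℚ))
def tau (k d : ℕ) : ℚ :=
  4^d * ((k+2*d).factorial : ℚ) / ((k.factorial : ℚ) * ((2*d).factorial : ℚ))

lemma factQ (n : ℕ) : ((n+1).factorial : ℚ) = (n+1) * n.factorial := by
  rw [Nat.factorial_succ]; push_cast; ring

lemma sig_d0 (k : ℕ) : sig k 0 = 2*k+1 := by
  have h : (k.factorial : ℚ) ≠ 0 := by exact_mod_cast Nat.factorial_ne_zero k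
  unfold sig
  norm_num [Nat.factorial]
  field_simp

lemma tau_d0 (k : ℕ) : tau k 0 = 1 := by
  have h : (k.factorial : ℚ) ≠ 0 := by exact_mod_cast Nat.factorial_ne_zero k
  unfold tau
  norm_num [Nat.factorial]
  exact Nat.factorial_ne_zero k

lemma sig_k0 (d : ℕ) : sig 0 d = 4^d := by
  have h : ((2*d).factorial : ℚ) ≠ 0 := by exact_mod_cast Nat.factorial_ne_zero (2*d)
  unfold sig
  rw [show (0+2*d) = 2*d by omega, show (2*d+1) = (2*d)+1 by omega, factQ]
  norm_num [Nat.factorial]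
  field_simp

lemma tau_k0 (d : ℕ) : tau 0 d = 4^d := by
  have h : ((2*d).factorial : ℚ) ≠ 0 := by exact_mod_cast Nat.factorial_ne_zero (2*d)
  unfold tau
  norm_num [Nat.factorial]
  rw [mul_div_assoc, div_self h, mul_one]

lemma fact_ne (n : ℕ) : ((n.factorial : ℕ) : ℚ) ≠ 0 := by
  exact_mod_cast Nat.factorial_ne_zero n

lemma sigtau_rec (m e : ℕ) :
    sig (m+1) (e+1) = 2*sig (m+1) e + sig m (e+1) + 2*tau (m+1) e + 2*tau m (e+1) ∧
    tau (m+1) (e+1) = 2*tau (m+1) e + tau m (e+1) + 2*sig (m+1) e := by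
  have hf1 : ((m+1+2*(e+1)).factorial : ℚ)
      = (m+2*e+3)*(m+2*e+2) * ((m+1+2*e).factorial : ℚ) := by
    rw [show m+1+2*(e+1) = (m+2*e+2)+1 by omega, factQ,
      show m+2*e+2 = (m+1+2*e)+1 by omega, factQ]
    push_cast; ring
  have hf2 : ((m+2*(e+1)).factorial : ℚ) = (m+2*e+2) * ((m+1+2*e).factorial : ℚ) := by
    rw [show m+2*(e+1) = (m+1+2*e)+1 by omega, factQ]
    push_cast; ring
  have hf3 : ((m+1).factorial : ℚ) = (m+1) * (m.factorial : ℚ) := factQ m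
  have hf4 : ((2*(e+1)+1).factorial : ℚ)
      = (2*e+3)*(2*e+2)*(2*e+1) * (((2*e).factorial : ℕ) : ℚ) := by
    rw [show 2*(e+1)+1 = (2*e+2)+1 by omega, factQ, show 2*e+2 = (2*e+1)+1 by omega, factQ,
      show (2*e+1) = (2*e)+1 by omega, factQ]
    push_cast; ring
  have hf5 : ((2*e+1).factorial : ℚ) = (2*e+1) * (((2*e).factorial : ℕ) : ℚ) := by
    rw [show (2*e+1) = (2*e)+1 by omega, factQ]
    push_cast; ring
  have hf6 : ((2*(e+1)).factorial : ℚ) = (2*e+2)*(2*e+1) * (((2*e).factorial : ℕ) : ℚ) := by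
    rw [show 2*(e+1) = (2*e+1)+1 by omega, factQ, show (2*e+1) = (2*e)+1 by omega, factQ]
    push_cast; ring
  have n1 := fact_ne (m+1+2*e)
  have n2 := fact_ne (2*e)
  have n3 := fact_ne m
  have n4 : ((m:ℚ)+1) ≠ 0 := by positivity
  have n5 : ((2*(e:ℚ))+1) ≠ 0 := by positivity
  have n6 : ((2*(e:ℚ))+2) ≠ 0 := by positivity
  have n7 : ((2*(e:ℚ))+3) ≠ 0 := by positivity
  constructor <;>
  · unfold sig tau
    simp only [hf1, hf2, hf3, hf4, hf5, hf6]
    push_cast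
    field_simp
    ring

lemma main : ∀ r k d : ℕ, k + d = r → SS r k = sig k d ∧ TT r k = tau k d := by
  intro r
  induction r with
  | zero =>
    intro k d h
    obtain ⟨rfl, rfl⟩ : k = 0 ∧ d = 0 := by omega
    constructor
    · rw [sig_d0]; simp [SS, Finset.sum_range_one]
    · rw [tau_d0]; simp [TT, Finset.sum_range_one]
  | succ r ih =>
    intro k d hkd
    rcases k with _ | m
    · -- k = 0
      obtain rfl : d = r + 1 := by omega
      obtain ⟨hS, hT⟩ := ih 0 r (by omega)
      rw [sig_k0] at hS
      rw [tau_k0] at hT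
      constructor
      · rw [Srec0, hS, hT, sig_k0]; ring
      · rw [Trec0, hS, hT, tau_k0]; ring
    · rcases d with _ | e
      · -- d = 0, k = r+1 = m+1
        obtain rfl : m = r := by omega
        have hS0 := SS_zero m (m+1) (by omega)
        have hT0 := TT_zero m (m+1) (by omega)
        obtain ⟨hS, hT⟩ := ih m 0 (by omega)
        constructor
        · rw [Srec, hS0, hT0, hS, hT, sig_d0, sig_d0, tau_d0]
          push_cast; ring
        · rw [Trec, hS0, hT0, hT, tau_d0, tau_d0]
          norm_num
      · -- d = e+1
        obtain rfl : m + 1 + e = r := by omega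
        obtain ⟨h1S, h1T⟩ := ih (m+1) e rfl
        obtain ⟨h2S, h2T⟩ := ih m (e+1) (by omega)
        obtain ⟨hA, hB⟩ := sigtau_rec m e
        constructor
        · rw [Srec, h1S, h1T, h2S, h2T]; exact hA.symm
        · rw [Trec, h1S, h1T, h2T]; exact hB.symm

/-- The combinatorial identity
`(1/4)^{r-k} Σ_{j=k}^{r} C(2r+1,2j) C(j,k) = (2r+1)(2r-k)!/(k!(2r+1-2k)!)`. -/
theorem coefficient_identity (r k : ℕ) (hk : k ≤ r) :
    (1 / 4 : ℚ) ^ (r - k) *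
        ∑ j ∈ Finset.Icc k r, ((2 * r + 1).choose (2 * j) * j.choose k : ℚ) =
      ((2 * r + 1) * (2 * r - k).factorial : ℚ)
        / ((k.factorial : ℚ) * ((2 * r + 1 - 2 * k).factorial : ℚ)) := by
  obtain ⟨d, rfl⟩ : ∃ d, r = k + d := ⟨r - k, by omega⟩
  have hS := (main (k+d) k d rfl).1
  have hsub : Finset.Icc k (k+d) ⊆ range (k+d+1) := by
    intro x hx
    simp only [Finset.mem_Icc] at hx
    simp only [mem_range]
    omega
  have hzero : ∀ x ∈ range (k+d+1), x ∉ Finset.Icc k (k+d) →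
      ((2*(k+d)+1).choose (2*x) * x.choose k : ℚ) = 0 := by
    intro x hx hx'
    simp only [mem_range] at hx
    simp only [Finset.mem_Icc, not_and_or, not_le] at hx'
    have : x < k := by omega
    rw [Nat.choose_eq_zero_of_lt this]
    push_cast
    ring
  rw [Finset.sum_subset hsub hzero]
  have hR : (∑ j ∈ range (k+d+1), ((2*(k+d)+1).choose (2*j) * j.choose k : ℚ)) = SS (k+d) k := by
    unfold SS
    refine Finset.sum_congr rfl fun x _ => ?_
    push_cast
    ring
  rw [hR, hS, show k+d-k = d by omega, show 2*(k+d)-k = k+2*d by omega,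
    show 2*(k+d)+1-2*k = 2*d+1 by omega]
  unfold sig
  have n1 := fact_ne k
  have n2 := fact_ne (2*d+1)
  have h4 : ((1:ℚ)/4)^d * 4^d = 1 := by
    rw [← mul_pow]
    norm_num
  push_cast
  field_simp
  ring
  exact h4
end

section
/- For each nonnegative integer r, the polynomial f(x,y) = Σ_{k=0}^{r} c_k x^{2r+1-2k} y^k + y^{2r+1}, where c_k = (2r+1)(2r-k)!/(k!(2r+1-2k)!), satisfies f(x,1-x) = 1 for all x. -/
open Finset

noncomputable def A (r k : ℕ) : ℝ :=
  ((2 * r + 1) * (2 * r - k).factorial : ℝ)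
      / ((k.factorial : ℝ) * ((2 * r + 1 - 2 * k).factorial : ℝ))

lemma A_zero (r : ℕ) : A r 0 = 1 := by
  unfold A
  rw [show 2 * r - 0 = 2 * r from rfl, show 2 * r + 1 - 2 * 0 = 2 * r + 1 from rfl,
    Nat.factorial_succ]
  have h := (2 * r).factorial_pos
  push_cast
  field_simp
  simp

lemma A_top (r : ℕ) : A r r = (2 * r + 1 : ℝ) := by
  unfold A
  rw [show 2 * r - r = r from by omega, show 2 * r + 1 - 2 * r = 1 from by omega]
  have h := r.factorial_pos
  simp [Nat.factorial]
  field_simp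

lemma A_one (r : ℕ) : A (r + 1) 1 = (2 * (r + 1) + 1 : ℝ) := by
  unfold A
  rw [show 2 * (r + 1) - 1 = 2 * r + 1 from by omega,
    show 2 * (r + 1) + 1 - 2 * 1 = 2 * r + 1 from by omega]
  have h := (2 * r + 1).factorial_pos
  simp [Nat.factorial_one]
  field_simp

lemma A_key (r k : ℕ) (h : k < r) :
    A (r + 2) (k + 2) = A (r + 1) (k + 2) + 2 * A (r + 1) (k + 1) - A r k := by
  obtain ⟨m, rfl⟩ : ∃ m, r = k + 1 + m := ⟨r - (k + 1), by omega⟩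
  unfold A
  rw [show 2 * (k + 1 + m + 2) - (k + 2) = (k + 2 * m + 2) + 1 + 1 from by omega,
    show 2 * (k + 1 + m + 2) + 1 - 2 * (k + 2) = 2 * m + 1 + 1 + 1 from by omega,
    show 2 * (k + 1 + m + 1) - (k + 2) = k + 2 * m + 2 from by omega,
    show 2 * (k + 1 + m + 1) + 1 - 2 * (k + 2) = 2 * m + 1 from by omega,
    show 2 * (k + 1 + m + 1) - (k + 1) = (k + 2 * m + 2) + 1 from by omega,
    show 2 * (k + 1 + m + 1) + 1 - 2 * (k + 1) = 2 * m + 1 + 1 + 1 from by omega,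
    show 2 * (k + 1 + m) - k = k + 2 * m + 2 from by omega,
    show 2 * (k + 1 + m) + 1 - 2 * k = 2 * m + 1 + 1 + 1 from by omega]
  simp only [Nat.factorial_succ]
  have c1 : ((k + 2 * m + 2).factorial : ℝ) ≠ 0 := by positivity
  have c2 : ((2 * m + 1).factorial : ℝ) ≠ 0 := by positivity
  have c3 : ((k).factorial : ℝ) ≠ 0 := by positivity
  push_cast
  field_simp
  ring

lemma peel2 (f : ℕ → ℝ) (n : ℕ) :
    ∑ j ∈ range (n + 2 + 1), f j
      = f 0 + f 1 + (∑ k ∈ range n, f (k + 2)) + f (n + 2) := by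
  rw [Finset.sum_range_succ, show n + 2 = (n + 1) + 1 from rfl, Finset.sum_range_succ',
    Finset.sum_range_succ']
  simp only [show ∀ m : ℕ, m + 1 + 1 = m + 2 from fun _ => rfl]
  ring

lemma peelA (f : ℕ → ℝ) (n : ℕ) :
    ∑ j ∈ range (n + 1 + 1), f j
      = f 0 + f 1 + ∑ k ∈ range n, f (k + 2) := by
  rw [Finset.sum_range_succ', Finset.sum_range_succ']
  simp only [show ∀ m : ℕ, m + 1 + 1 = m + 2 from fun _ => rfl]
  ring

lemma peelB (f : ℕ → ℝ) (n : ℕ) :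
    ∑ j ∈ range (n + 1 + 1), f j
      = f 0 + (∑ k ∈ range n, f (k + 1)) + f (n + 1) := by
  rw [Finset.sum_range_succ', Finset.sum_range_succ]
  ring

lemma main_sum (r : ℕ) (x : ℝ) :
    ∑ k ∈ range (r + 1), A r k * x ^ (2 * r + 1 - 2 * k) * (1 - x) ^ k
      = 1 - (1 - x) ^ (2 * r + 1) := by
  induction r using Nat.twoStepInduction with
  | zero => norm_num [A_zero]
  | one =>
      rw [show (1:ℕ) + 1 = 1 + 1 from rfl, Finset.sum_range_succ, Finset.sum_range_one]
      have h1 := A_top 1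
      norm_num at h1
      norm_num [A_zero, h1]
      ring
  | more r ih1 ih2 =>
      rw [peel2 (fun k => A (r + 2) k * x ^ (2 * (r + 2) + 1 - 2 * k) * (1 - x) ^ k) r]
      have hbA := (peelA (fun k => A (r + 1) k * x ^ (2 * (r + 1) + 1 - 2 * k) * (1 - x) ^ k) r).symm.trans ih2
      have hbB := (peelB (fun k => A (r + 1) k * x ^ (2 * (r + 1) + 1 - 2 * k) * (1 - x) ^ k) r).symm.trans ih2
      have hcC := (Finset.sum_range_succ (fun k => A r k * x ^ (2 * r + 1 - 2 * k) * (1 - x) ^ k) r).symm.trans ih1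
      have hterm : ∀ k ∈ range r,
          A (r + 2) (k + 2) * x ^ (2 * (r + 2) + 1 - 2 * (k + 2)) * (1 - x) ^ (k + 2)
            = x ^ 2 * (A (r + 1) (k + 2) * x ^ (2 * (r + 1) + 1 - 2 * (k + 2)) * (1 - x) ^ (k + 2))
              + 2 * (1 - x) * (A (r + 1) (k + 1) * x ^ (2 * (r + 1) + 1 - 2 * (k + 1)) * (1 - x) ^ (k + 1))
              - (1 - x) ^ 2 * (A r k * x ^ (2 * r + 1 - 2 * k) * (1 - x) ^ k) := by
        intro k hk
        rw [Finset.mem_range] at hk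
        rw [show 2 * (r + 2) + 1 - 2 * (k + 2) = 2 * r + 1 - 2 * k from by omega,
          show 2 * (r + 1) + 1 - 2 * (k + 2) = 2 * r - 1 - 2 * k from by omega,
          show 2 * (r + 1) + 1 - 2 * (k + 1) = 2 * r + 1 - 2 * k from by omega,
          A_key r k hk,
          show 2 * r + 1 - 2 * k = 2 + (2 * r - 1 - 2 * k) from by omega,
          pow_add]
        ring
      rw [Finset.sum_congr rfl hterm, Finset.sum_sub_distrib, Finset.sum_add_distrib,
        ← Finset.mul_sum, ← Finset.mul_sum, ← Finset.mul_sum]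
      have v1 : A (r + 2) 0 = 1 := A_zero _
      have v2 : A (r + 2) 1 = 2 * (r : ℝ) + 5 := (A_one (r + 1)).trans (by push_cast; ring)
      have v3 : A (r + 2) (r + 2) = 2 * (r : ℝ) + 5 := (A_top (r + 2)).trans (by push_cast; ring)
      have v4 : A (r + 1) (r + 1) = 2 * (r : ℝ) + 3 := (A_top (r + 1)).trans (by push_cast; ring)
      have v5 : A r r = 2 * (r : ℝ) + 1 := (A_top r).trans (by push_cast; ring)
      have v6 : A (r + 1) 0 = 1 := A_zero _
      have v7 : A (r + 1) 1 = 2 * (r : ℝ) + 3 := (A_one r).trans (by push_cast; ring)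
      rw [show 2 * (r + 2) + 1 - 2 * 0 = 2 * r + 5 from by omega,
        show 2 * (r + 2) + 1 - 2 * 1 = 2 * r + 3 from by omega,
        show 2 * (r + 2) + 1 - 2 * (r + 2) = 1 from by omega,
        v1, v2, v3] 
      simp only [show 2 * (r + 1) + 1 - 2 * 0 = 2 * r + 3 from by omega,
        show 2 * (r + 1) + 1 - 2 * 1 = 2 * r + 1 from by omega,
        show 2 * (r + 1) + 1 - 2 * (r + 1) = 1 from by omega,
        v4, v6, v7] at hbA hbB
      rw [show 2 * r + 1 - 2 * r = 1 from by omega, v5] at hcC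
      linear_combination x ^ 2 * hbA + 2 * (1 - x) * hbB - (1 - x) ^ 2 * hcC

/-- The polynomial `Σ_{k=0}^{r} c_k x^{2r+1-2k} y^k + y^{2r+1}`, with
`c_k = (2r+1)(2r-k)!/(k!(2r+1-2k)!)`, equals `1` on the line `y = 1 - x`. -/
theorem sharp_polynomial_eq_one_on_line (r : ℕ) (x : ℝ) :
    (∑ k ∈ Finset.range (r + 1),
        (((2 * r + 1) * (2 * r - k).factorial : ℝ)
            / ((k.factorial : ℝ) * ((2 * r + 1 - 2 * k).factorial : ℝ)))
          * x ^ (2 * r + 1 - 2 * k) * (1 - x) ^ k)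
      + (1 - x) ^ (2 * r + 1) = 1 := by
  have h := main_sum r x
  have e : (∑ k ∈ Finset.range (r + 1),
        (((2 * r + 1) * (2 * r - k).factorial : ℝ)
            / ((k.factorial : ℝ) * ((2 * r + 1 - 2 * k).factorial : ℝ)))
          * x ^ (2 * r + 1 - 2 * k) * (1 - x) ^ k)
      = ∑ k ∈ Finset.range (r + 1), A r k * x ^ (2 * r + 1 - 2 * k) * (1 - x) ^ k := by
    refine Finset.sum_congr rfl fun k _ => ?_
    rw [A]
  rw [e, h]
  ring
end

section
/- For each odd positive integer d = 2r+1, there exists a polynomial p(x,y) of degree exactly d, with exactly r+2 nonzero monomial terms, all coefficients nonnegative, such that p(x,y) - 1 is divisible by x + y - 1. -/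
/-!
The witness is `L (x, y) + y ^ (2r+1)`, where `L` is the Lucas polynomial of index `n = 2r+1`,
defined by `L₀ = 2`, `L₁ = a`, `Lₙ₊₂ = a Lₙ₊₁ + b Lₙ`, so that `Lₙ (α + β, -αβ) = αⁿ + βⁿ`.
Modulo `x + y - 1` we may take `α = 1`, `β = -y`, whence `Lₙ (x, y) ≡ 1 + (-y)ⁿ = 1 - yⁿ` as `n` is
odd. The coefficient of `a ^ (n-2k) * b ^ k` in `Lₙ` is a positive integer for `2k ≤ n`, and the
monomials `x ^ (n-2k) * y ^ k` (`k ≤ r`) and `y ^ n` are distinct, of degree at most `n`.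
-/

open Finset

/-- For `0 < n` and `2k ≤ n` this is `n (n-k-1)! / (k! (n-2k)!)`; at `n = 2r+1` it is the `c_k`
of the witness. -/
def lucasCoeff : ℕ → ℕ → ℕ
  | 0, 0 => 2
  | 0, _ + 1 => 0
  | 1, 0 => 1
  | 1, _ + 1 => 0
  | n + 2, 0 => lucasCoeff (n + 1) 0
  | n + 2, k + 1 => lucasCoeff (n + 1) (k + 1) + lucasCoeff n k

theorem lucasCoeff_eq_zero {n k : ℕ} (h : n < 2 * k) : lucasCoeff n k = 0 := by
  induction n, k using lucasCoeff.induct with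
  | case6 n k ih₁ ih₂ => rw [lucasCoeff, ih₁ (by omega), ih₂ (by omega)]
  | _ => first | rfl | omega

theorem lucasCoeff_pos {n k : ℕ} (h : 2 * k ≤ n) : 0 < lucasCoeff n k := by
  induction n, k using lucasCoeff.induct with
  | case5 n ih => exact ih (by omega)
  | case6 n k _ ih₂ => exact Nat.add_pos_right _ (ih₂ (by omega))
  | _ => first | decide | omega

section Lucas

variable {R : Type*}

def lucas [CommSemiring R] (a b : R) : ℕ → R
  | 0 => 2
  | 1 => a
  | n + 2 => a * lucas a b (n + 1) + b * lucas a b n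

theorem map_lucas {S : Type*} [CommSemiring R] [CommSemiring S] (f : R →+* S) (a b : R) (n : ℕ) :
    f (lucas a b n) = lucas (f a) (f b) n := by
  induction n using Nat.twoStepInduction with
  | zero => simp [lucas, map_ofNat]
  | one => simp [lucas]
  | more n ih₀ ih₁ => simp [lucas, ih₀, ih₁]

theorem lucas_add_neg_mul [CommRing R] (α β : R) (n : ℕ) :
    lucas (α + β) (-(α * β)) n = α ^ n + β ^ n := by
  induction n using Nat.twoStepInduction with
  | zero => norm_num [lucas]
  | one => simp [lucas]
  | more n ih₀ ih₁ => rw [lucas, ih₀, ih₁]; ring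

theorem lucas_add_pow_eq_one [CommRing R] {x y : R} (h : x + y = 1) (r : ℕ) :
    lucas x y (2 * r + 1) + y ^ (2 * r + 1) = 1 := by
  obtain rfl : x = 1 + -y := by linear_combination h
  have := lucas_add_neg_mul (1 : R) (-y) (2 * r + 1)
  rw [one_mul, neg_neg, one_pow, Odd.neg_pow ⟨r, rfl⟩] at this
  rw [this]
  ring

theorem lucas_eq_sum [CommSemiring R] (a b : R) {n N : ℕ} (h : n < 2 * N) :
    lucas a b n = ∑ k ∈ range N, (lucasCoeff n k : R) * a ^ (n - 2 * k) * b ^ k := by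
  obtain ⟨M, rfl⟩ : ∃ M, N = M + 1 := ⟨N - 1, by omega⟩
  induction n using Nat.twoStepInduction generalizing M with
  | zero => simp [sum_range_succ', lucas, lucasCoeff]
  | one => simp [sum_range_succ', lucas, lucasCoeff]
  | more n ih₀ ih₁ =>
    obtain ⟨M, rfl⟩ : ∃ K, M = K + 1 := ⟨M - 1, by omega⟩
    have step (k : ℕ) : (lucasCoeff (n + 2) (k + 1) : R) * a ^ (n + 2 - 2 * (k + 1)) * b ^ (k + 1) =
        a * ((lucasCoeff (n + 1) (k + 1) : R) * a ^ (n + 1 - 2 * (k + 1)) * b ^ (k + 1)) +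
          b * ((lucasCoeff n k : R) * a ^ (n - 2 * k) * b ^ k) := by
      rw [lucasCoeff, Nat.cast_add, show n + 2 - 2 * (k + 1) = n - 2 * k by omega]
      rcases lt_or_ge (n + 1) (2 * (k + 1)) with hk | hk
      · rw [lucasCoeff_eq_zero hk]; ring
      · rw [show n - 2 * k = n + 1 - 2 * (k + 1) + 1 by omega]; ring
    rw [lucas, ih₁ (M + 1) (by omega), ih₀ M (by omega), sum_range_succ' _ (M + 1),
      sum_range_succ' _ (M + 1), sum_congr rfl fun k _ => step k, sum_add_distrib, mul_add,
      mul_sum, mul_sum]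
    simp only [lucasCoeff, mul_zero, Nat.sub_zero, pow_zero, mul_one]
    ring

end Lucas

namespace MvPolynomial

variable {ι σ R : Type*} [CommSemiring R] {s : Finset ι} {e : ι → σ →₀ ℕ} {c : ι → R}

theorem coeff_sum_monomial_nonneg [PartialOrder R] [IsOrderedAddMonoid R]
    (hc : ∀ i ∈ s, 0 ≤ c i) (m : σ →₀ ℕ) : 0 ≤ coeff m (∑ i ∈ s, monomial (e i) (c i)) := by
  classical
  rw [coeff_sum]
  refine sum_nonneg fun i hi => ?_
  rw [coeff_monomial]
  split_ifs
  exacts [hc i hi, le_rfl]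

theorem support_sum_monomial_of_injOn [DecidableEq σ] (he : Set.InjOn e s)
    (hc : ∀ i ∈ s, c i ≠ 0) : (∑ i ∈ s, monomial (e i) (c i)).support = s.image e := by
  ext m
  simp only [mem_support_iff, coeff_sum, coeff_monomial, mem_image]
  constructor
  · intro h
    obtain ⟨i, hi, hne⟩ := exists_ne_zero_of_sum_ne_zero h
    exact ⟨i, hi, by_contra fun h => hne (if_neg h)⟩
  · rintro ⟨i, hi, rfl⟩
    rw [sum_eq_single_of_mem i hi fun j hj hji => if_neg (he.ne hj hi hji), if_pos rfl]
    exact hc i hi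

end MvPolynomial

open MvPolynomial

section SharpPolynomial

variable (r : ℕ)

noncomputable def sharpExponent (k : ℕ) : Fin 2 →₀ ℕ :=
  if k ≤ r then Finsupp.single 0 (2 * r + 1 - 2 * k) + Finsupp.single 1 k
  else Finsupp.single 1 (2 * r + 1)

noncomputable def sharpCoeff (k : ℕ) : ℝ :=
  if k ≤ r then lucasCoeff (2 * r + 1) k else 1

noncomputable def sharpPoly : MvPolynomial (Fin 2) ℝ :=
  ∑ k ∈ range (r + 2), monomial (sharpExponent r k) (sharpCoeff r k)

theorem sharpExponent_injOn : Set.InjOn (sharpExponent r) (range (r + 2)) := by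
  intro j hj k hk h
  have h₁ := DFunLike.congr_fun h 1
  simp only [coe_range, Set.mem_Iio] at hj hk
  simp only [sharpExponent, apply_ite (fun f : Fin 2 →₀ ℕ => f 1), Finsupp.add_apply,
    Finsupp.single_eq_same, Finsupp.single_eq_of_ne one_ne_zero, zero_add] at h₁
  split_ifs at h₁ <;> omega

theorem sharpCoeff_pos (k : ℕ) : 0 < sharpCoeff r k := by
  unfold sharpCoeff
  split_ifs with hk
  · exact_mod_cast lucasCoeff_pos (by omega)
  · exact one_pos

theorem degree_sharpExponent_le (k : ℕ) : (sharpExponent r k).degree ≤ 2 * r + 1 := by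
  unfold sharpExponent
  split_ifs
  · rw [map_add, Finsupp.degree_single, Finsupp.degree_single]; omega
  · rw [Finsupp.degree_single]

theorem sharpPoly_eq : sharpPoly r = lucas (X 0) (X 1) (2 * r + 1) + X 1 ^ (2 * r + 1) := by
  rw [sharpPoly, sum_range_succ, lucas_eq_sum (N := r + 1) _ _ (by omega)]
  congr 1
  · refine sum_congr rfl fun k hk => ?_
    rw [sharpExponent, sharpCoeff, if_pos (mem_range_succ_iff.mp hk),
      if_pos (mem_range_succ_iff.mp hk), X_pow_eq_monomial, X_pow_eq_monomial,
      ← map_natCast (C : ℝ →+* MvPolynomial (Fin 2) ℝ), C_mul_monomial, monomial_mul, mul_one,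
      mul_one]
  · rw [sharpExponent, sharpCoeff, if_neg (by omega), if_neg (by omega), X_pow_eq_monomial]

theorem support_sharpPoly : (sharpPoly r).support = (range (r + 2)).image (sharpExponent r) :=
  support_sum_monomial_of_injOn (sharpExponent_injOn r) fun k _ => (sharpCoeff_pos r k).ne'

theorem card_support_sharpPoly : (sharpPoly r).support.card = r + 2 := by
  rw [support_sharpPoly, card_image_of_injOn (sharpExponent_injOn r), card_range]

theorem totalDegree_sharpPoly : (sharpPoly r).totalDegree = 2 * r + 1 := by
  refine le_antisymm ?_ ?_
  · rw [totalDegree, support_sharpPoly, sup_image]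
    exact Finset.sup_le fun k _ => degree_sharpExponent_le r k
  · have h := le_totalDegree <| (support_sharpPoly r).symm ▸
      mem_image_of_mem (sharpExponent r) (self_mem_range_succ (r + 1))
    rwa [sharpExponent, if_neg (by omega), Finsupp.sum_single_index rfl] at h

theorem coeff_sharpPoly_nonneg (m : Fin 2 →₀ ℕ) : 0 ≤ (sharpPoly r).coeff m :=
  coeff_sum_monomial_nonneg (fun k _ => (sharpCoeff_pos r k).le) m

theorem X_add_X_sub_one_dvd_sharpPoly_sub_one :
    (X 0 + X 1 - 1 : MvPolynomial (Fin 2) ℝ) ∣ sharpPoly r - 1 := by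
  set I := Ideal.span {(X 0 + X 1 - 1 : MvPolynomial (Fin 2) ℝ)}
  have h : Ideal.Quotient.mk I (X 0) + Ideal.Quotient.mk I (X 1) = 1 := by
    rw [← sub_eq_zero, ← map_add, ← map_one (Ideal.Quotient.mk I), ← map_sub,
      Ideal.Quotient.eq_zero_iff_mem]
    exact Ideal.mem_span_singleton_self _
  rw [← Ideal.mem_span_singleton, ← Ideal.Quotient.eq, sharpPoly_eq, map_add, map_pow, map_lucas,
    map_one]
  exact lucas_add_pow_eq_one h r

end SharpPolynomial

open MvPolynomial in
/-- For each odd `d = 2r+1` there is a polynomial of degree exactly `d`,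
with exactly `r+2` nonzero monomial terms, all coefficients nonnegative,
such that `p - 1` is divisible by `x + y - 1`. -/
theorem exists_sharp_polynomial (r : ℕ) :
    ∃ p : MvPolynomial (Fin 2) ℝ,
      p.totalDegree = 2 * r + 1 ∧
      p.support.card = r + 2 ∧
      (∀ m, 0 ≤ p.coeff m) ∧
      (X 0 + X 1 - 1) ∣ (p - 1) :=
  ⟨sharpPoly r, totalDegree_sharpPoly r, card_support_sharpPoly r, coeff_sharpPoly_nonneg r,
    X_add_X_sub_one_dvd_sharpPoly_sub_one r⟩
end

section
/- Let p(x,y) be a real polynomial with all nonnegative coefficients such that p(x,y) - 1 is divisible by x + y - 1. If p has degree d and N nonzero monomial terms, then d ≤ 2N - 3. -/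
open MvPolynomial

/-- Difference operator on sequences (with implicit zero boundary on the left). -/
private def Dop (g : ℕ → ℝ) : ℕ → ℝ
  | 0 => g 0
  | k+1 => g (k+1) - g k

/-- `AChain S n` : there is a strictly increasing sequence of `n+1` positions where `S`
is nonzero with alternating signs (`n` sign changes). -/
private def AChain (S : ℕ → ℝ) (n : ℕ) : Prop :=
  ∃ f : ℕ → ℕ, (∀ i, i < n → f i < f (i+1)) ∧ (∀ i, i ≤ n → S (f i) ≠ 0) ∧
    (∀ i, i < n → S (f i) * S (f (i+1)) < 0)

private lemma fmono {f : ℕ → ℕ} {n : ℕ} (hf : ∀ i, i < n → f i < f (i+1)) :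
    ∀ i j, i < j → j ≤ n → f i < f j := by
  have key : ∀ k i, i + k + 1 ≤ n → f i < f (i + k + 1) := by
    intro k
    induction k with
    | zero => intro i h; exact hf i (by omega)
    | succ k ih =>
      intro i h
      have h1 : f i < f (i + k + 1) := ih i (by omega)
      have h2 : f (i + k + 1) < f (i + k + 1 + 1) := hf _ (by omega)
      have : i + (k+1) + 1 = i + k + 1 + 1 := by omega
      rw [this]; omega
  intro i j hij hj
  have h : j = i + (j - i - 1) + 1 := by omega
  rw [h]; exact key _ i (by omega)

private lemma achain_congr {S S' : ℕ → ℝ} (h : ∀ k, S k = S' k) {n : ℕ}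
    (hc : AChain S n) : AChain S' n := by
  obtain ⟨f, h1, h2, h3⟩ := hc
  exact ⟨f, h1, fun i hi => by rw [← h]; exact h2 i hi,
    fun i hi => by rw [← h, ← h]; exact h3 i hi⟩

private lemma sign_skip {x y z w : ℝ} (h1 : x*y < 0) (h2 : y*z < 0) (h3 : z*w < 0) :
    x*w < 0 := by
  by_contra hxw
  push_neg at hxw
  have hA : 0 < (x*y)*(z*w) := mul_pos_of_neg_of_neg h1 h3
  have hB : (x*w)*(y*z) ≤ 0 := mul_nonpos_of_nonneg_of_nonpos hxw (le_of_lt h2)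
  nlinarith

private lemma mulpos {x c s : ℝ} (h1 : x*c > 0) (h2 : c*s > 0) : x*s > 0 := by
  by_contra hxs
  push_neg at hxs
  have hB : (x*s)*(c*c) ≤ 0 := mul_nonpos_of_nonpos_of_nonneg hxs (mul_self_nonneg c)
  nlinarith

private lemma mulneg {x y u v : ℝ} (h1 : x*u > 0) (h2 : y*v > 0) (h3 : u*v < 0) :
    x*y < 0 := by
  by_contra hxy
  push_neg at hxy
  have hA : 0 < (x*u)*(y*v) := mul_pos h1 h2
  have hB : (x*y)*(u*v) ≤ 0 := mul_nonpos_of_nonneg_of_nonpos hxy (le_of_lt h3)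
  nlinarith

/-- Dropping (at most) one value from an alternating chain costs at most 2 sign changes. -/
private lemma achain_update {S S' : ℕ → ℝ} {a : ℕ} (h : ∀ k, k ≠ a → S' k = S k)
    {n : ℕ} (hn : 1 ≤ n) (hc : AChain S n) : AChain S' (n - 2) := by
  classical
  obtain ⟨f, h1, h2, h3⟩ := hc
  have hm := fmono h1
  by_cases hex : ∃ i, i ≤ n ∧ f i = a
  · obtain ⟨i0, hi0, hfi0⟩ := hex
    have hne : ∀ i, i ≤ n → i ≠ i0 → f i ≠ a := by
      intro i hi hii0
      rcases Nat.lt_or_ge i i0 with hlt | hge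
      · have := hm i i0 hlt hi0; omega
      · have : i0 < i := by omega
        have := hm i0 i this hi; omega
    by_cases hn1 : n ≤ 1
    · -- n = 1 : produce a trivial chain of length 0
      have hnn : n - 2 = 0 := by omega
      rw [hnn]
      set j : ℕ := if i0 = 0 then 1 else 0 with hj
      have hjn : j ≤ n ∧ j ≠ i0 := by
        by_cases h0 : i0 = 0 <;> simp [hj, h0] <;> omega
      have hfa : f j ≠ a := hne j hjn.1 hjn.2
      refine ⟨fun _ => f j, fun i hi => by omega, fun i _ => ?_, fun i hi => by omega⟩
      rw [h _ hfa]; exact h2 j hjn.1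
    · have hn2 : 2 ≤ n := by omega
      by_cases hlow : i0 ≤ 1
      · refine ⟨fun l => f (l + 2), ?_, ?_, ?_⟩
        · intro l hl
          dsimp only
          have e : l + 1 + 2 = l + 2 + 1 := by omega
          rw [e]; exact h1 (l+2) (by omega)
        · intro l hl
          dsimp only
          have hfa : f (l+2) ≠ a := hne (l+2) (by omega) (by omega)
          rw [h _ hfa]; exact h2 (l+2) (by omega)
        · intro l hl
          dsimp only
          have hfa : f (l+2) ≠ a := hne (l+2) (by omega) (by omega)
          have hfa' : f (l+1+2) ≠ a := hne (l+1+2) (by omega) (by omega)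
          rw [h _ hfa, h _ hfa']
          have e : l + 1 + 2 = l + 2 + 1 := by omega
          rw [e]; exact h3 (l+2) (by omega)
      · by_cases hhigh : n - 1 ≤ i0
        · refine ⟨f, ?_, ?_, ?_⟩
          · intro l hl; exact h1 l (by omega)
          · intro l hl
            have hfa : f l ≠ a := hne l (by omega) (by omega)
            rw [h _ hfa]; exact h2 l (by omega)
          · intro l hl
            have hfa : f l ≠ a := hne l (by omega) (by omega)
            have hfa' : f (l+1) ≠ a := hne (l+1) (by omega) (by omega)
            rw [h _ hfa, h _ hfa']; exact h3 l (by omega)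
        · -- 2 ≤ i0 ≤ n-2 : junction construction
          have hi0n : i0 + 2 ≤ n := by omega
          refine ⟨fun l => if l < i0 then f l else f (l + 2), ?_, ?_, ?_⟩
          · intro l hl
            dsimp only
            by_cases hc1 : l + 1 < i0
            · rw [if_pos (by omega : l < i0), if_pos hc1]; exact h1 l (by omega)
            · by_cases hc2 : l < i0
              · rw [if_pos hc2, if_neg hc1]
                exact hm l (l+1+2) (by omega) (by omega)
              · rw [if_neg hc2, if_neg hc1]
                have e : l + 1 + 2 = l + 2 + 1 := by omega
                rw [e]; exact h1 (l+2) (by omega)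
          · intro l hl
            dsimp only
            by_cases hc2 : l < i0
            · rw [if_pos hc2]
              have hfa : f l ≠ a := hne l (by omega) (by omega)
              rw [h _ hfa]; exact h2 l (by omega)
            · rw [if_neg hc2]
              have hfa : f (l+2) ≠ a := hne (l+2) (by omega) (by omega)
              rw [h _ hfa]; exact h2 (l+2) (by omega)
          · intro l hl
            dsimp only
            by_cases hc1 : l + 1 < i0
            · rw [if_pos (by omega : l < i0), if_pos hc1]
              have hfa : f l ≠ a := hne l (by omega) (by omega)
              have hfa' : f (l+1) ≠ a := hne (l+1) (by omega) (by omega)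
              rw [h _ hfa, h _ hfa']; exact h3 l (by omega)
            · by_cases hc2 : l < i0
              · -- junction : l + 1 = i0
                have hli0 : l + 1 = i0 := by omega
                rw [if_pos hc2, if_neg hc1]
                have hfa : f l ≠ a := hne l (by omega) (by omega)
                have hfa' : f (l+1+2) ≠ a := hne (l+1+2) (by omega) (by omega)
                rw [h _ hfa, h _ hfa']
                have e1 : l + 1 + 2 = l + 3 := by omega
                rw [e1]
                have p1 : S (f l) * S (f (l+1)) < 0 := h3 l (by omega)
                have p2 : S (f (l+1)) * S (f (l+2)) < 0 := h3 (l+1) (by omega)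
                have p3 : S (f (l+2)) * S (f (l+3)) < 0 := h3 (l+2) (by omega)
                exact sign_skip p1 p2 p3
              · rw [if_neg hc2, if_neg hc1]
                have hfa : f (l+2) ≠ a := hne (l+2) (by omega) (by omega)
                have hfa' : f (l+1+2) ≠ a := hne (l+1+2) (by omega) (by omega)
                rw [h _ hfa, h _ hfa']
                have e : l + 1 + 2 = l + 2 + 1 := by omega
                rw [e]; exact h3 (l+2) (by omega)
  · push_neg at hex
    refine ⟨f, ?_, ?_, ?_⟩
    · intro l hl; exact h1 l (by omega)
    · intro l hl
      rw [h _ (hex l (by omega))]; exact h2 l (by omega)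
    · intro l hl
      rw [h _ (hex l (by omega)), h _ (hex (l+1) (by omega))]; exact h3 l (by omega)

/-- Modifying a sequence off a finite set `F` costs at most `2 * F.card` sign changes,
provided the new sequence is not identically zero. -/
private lemma achain_sub (F : Finset ℕ) :
    ∀ (S S' : ℕ → ℝ) (n : ℕ), (∀ k, k ∉ F → S' k = S k) → AChain S n →
      (∃ k, S' k ≠ 0) → AChain S' (n - 2 * F.card) := by
  classical
  induction F using Finset.induction_on with
  | empty =>
    intro S S' n h hc _
    simpa using achain_congr (fun k => (h k (by simp)).symm) hc
  | @insert a F' ha ih =>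
    intro S S' n h hc hnz
    by_cases hsmall : n - 2 * (insert a F').card = 0
    · rw [hsmall]
      obtain ⟨k0, hk0⟩ := hnz
      exact ⟨fun _ => k0, fun i hi => by omega, fun i _ => hk0, fun i hi => by omega⟩
    · have hcard : (insert a F').card = F'.card + 1 := Finset.card_insert_of_notMem ha
      have hnF : 2 * F'.card + 3 ≤ n := by omega
      set S'' : ℕ → ℝ := fun k => if k = a then S k else S' k with hS''
      have h'' : ∀ k, k ∉ F' → S'' k = S k := by
        intro k hk
        by_cases hka : k = a
        · simp [hS'', hka]
        · simp only [hS'', if_neg hka]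
          exact h k (by simp [hka, hk])
      have hnz'' : ∃ k, S'' k ≠ 0 := by
        obtain ⟨f, hf1, hf2, hf3⟩ := hc
        have : ∃ i, i ≤ n ∧ f i ∉ insert a F' := by
          by_contra hcon
          push_neg at hcon
          have hinj : Set.InjOn f (Finset.range (n+1) : Finset ℕ) := by
            intro i hi j hj hij
            simp only [Finset.coe_range, Set.mem_Iio] at hi hj
            by_contra hne
            rcases Nat.lt_or_ge i j with hlt | hge
            · have := fmono hf1 i j hlt (by omega); omega
            · have : j < i := by omega
              have := fmono hf1 j i this (by omega); omega
          have hmaps : ∀ i ∈ Finset.range (n+1), f i ∈ insert a F' := by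
            intro i hi
            simp only [Finset.mem_range] at hi
            exact hcon i (by omega)
          have := Finset.card_le_card_of_injOn f hmaps hinj
          simp only [Finset.card_range, hcard] at this
          omega
        obtain ⟨i, hi, hfi⟩ := this
        refine ⟨f i, ?_⟩
        have h1 : f i ≠ a := by intro hh; exact hfi (by simp [hh])
        have h2' : f i ∉ F' := by intro hh; exact hfi (by simp [hh])
        rw [show S'' (f i) = S (f i) from h'' (f i) h2']
        exact hf2 i hi
      have hch'' : AChain S'' (n - 2 * F'.card) := ih S S'' n h'' hc hnz''
      have hupd : ∀ k, k ≠ a → S' k = S'' k := by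
        intro k hk; simp [hS'', if_neg hk]
      have := achain_update hupd (by omega) hch''
      have heq : n - 2 * F'.card - 2 = n - 2 * (insert a F').card := by
        rw [hcard]; omega
      rwa [heq] at this

private lemma sum_Dop (g : ℕ → ℝ) : ∀ m, ∑ l ∈ Finset.range (m+1), Dop g l = g m := by
  intro m
  induction m with
  | zero => simp [Dop]
  | succ m ih => rw [Finset.sum_range_succ, ih]; simp [Dop]

private lemma exists_sign (t : Finset ℕ) (g : ℕ → ℝ) (c : ℝ) (hc : c ≠ 0)
    (h : ∑ l ∈ t, g l = c) : ∃ l ∈ t, g l * c > 0 := by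
  by_contra hcon
  push_neg at hcon
  have h1 : ∑ l ∈ t, g l * c ≤ 0 := Finset.sum_nonpos fun l hl => hcon l hl
  rw [← Finset.sum_mul, h] at h1
  have h2 : 0 < c * c := mul_self_pos.mpr hc
  nlinarith

/-- Key variation-increasing lemma: the difference operator (with zero boundary conditions)
increases the number of sign changes by at least one. -/
private lemma achain_D {S : ℕ → ℝ} (B0 : ℕ) (hfin : ∀ k, B0 ≤ k → S k = 0)
    {n : ℕ} (hc : AChain S n) : AChain (Dop S) (n + 1) := by
  classical
  obtain ⟨f, h1, h2, h3⟩ := hc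
  have hm := fmono h1
  set B : ℕ := B0 + f n + 1 with hB
  have hSB : S B = 0 := hfin B (by omega)
  have hsum2 : ∀ m m', m < m' → ∑ l ∈ Finset.Ico (m+1) (m'+1), Dop S l = S m' - S m := by
    intro m m' hmm
    have := Finset.sum_Ico_eq_sub (Dop S) (show m+1 ≤ m'+1 by omega)
    rw [this]
    rw [show Finset.range (m'+1) = Finset.range (m'+1) from rfl]
    rw [sum_Dop, sum_Dop]
  -- witnesses
  have W0 : ∃ l ∈ Finset.range (f 0 + 1), Dop S l * S (f 0) > 0 :=
    exists_sign _ _ _ (h2 0 (by omega)) (sum_Dop S (f 0))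
  have Wmid : ∀ i, i < n →
      ∃ l ∈ Finset.Ico (f i + 1) (f (i+1) + 1), Dop S l * S (f (i+1)) > 0 := by
    intro i hi
    have hprod := h3 i hi
    have hcs : (S (f (i+1)) - S (f i)) * S (f (i+1)) > 0 := by nlinarith [h2 (i+1) (by omega : i+1 ≤ n), sq_nonneg (S (f (i+1)))]
    have hcne : S (f (i+1)) - S (f i) ≠ 0 := by
      intro hh; rw [hh] at hcs; simp at hcs
    obtain ⟨l, hl, hl2⟩ := exists_sign (Finset.Ico (f i + 1) (f (i+1) + 1)) (Dop S) _
      hcne (hsum2 (f i) (f (i+1)) (h1 i hi))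
    exact ⟨l, hl, mulpos hl2 hcs⟩
  have Wlast : ∃ l ∈ Finset.Ico (f n + 1) (B + 1), Dop S l * (-(S (f n))) > 0 := by
    have hs : ∑ l ∈ Finset.Ico (f n + 1) (B + 1), Dop S l = -(S (f n)) := by
      rw [hsum2 (f n) B (by omega), hSB]; ring
    exact exists_sign _ _ _ (by simpa using h2 n le_rfl) hs
  obtain ⟨l0, hl0mem, hl0⟩ := W0
  choose lm hlmmem hlm using Wmid
  obtain ⟨ll, hllmem, hll⟩ := Wlast
  -- the new chain
  set g : ℕ → ℕ := fun i => if h : i = 0 then l0 else if h' : i ≤ n then lm (i-1) (by omega) else ll with hg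
  set σ : ℕ → ℝ := fun i => if i ≤ n then S (f i) else -(S (f n)) with hσ
  have hgl : ∀ i, (hi : i ≤ n+1) → Dop S (g i) * σ i > 0 := by
    intro i hi
    by_cases hi0 : i = 0
    · subst hi0
      simp only [hg, hσ, dif_pos rfl, if_pos (show 0 ≤ n by omega)]
      exact hl0
    · by_cases hin : i ≤ n
      · simp only [hg, hσ, dif_neg hi0, dif_pos hin, if_pos hin]
        have h' := hlm (i-1) (by omega)
        have e : f (i - 1 + 1) = f i := by congr 1; omega
        rwa [e] at h'
      · have hieq : i = n+1 := by omega
        simp only [hg, hσ, dif_neg hi0, dif_neg hin, if_neg hin]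
        exact hll
  have hσalt : ∀ i, i < n+1 → σ i * σ (i+1) < 0 := by
    intro i hi
    by_cases hin : i < n
    · simp only [hσ, if_pos (show i ≤ n by omega), if_pos (show i+1 ≤ n by omega)]
      exact h3 i hin
    · have hieq : i = n := by omega
      simp only [hσ, if_pos (show i ≤ n by omega), if_neg (show ¬ i+1 ≤ n by omega)]
      rw [hieq]
      have hne := h2 n le_rfl
      have h0 : 0 < S (f n) * S (f n) := mul_self_pos.mpr hne
      nlinarith
  have hgmem : ∀ i, i ≤ n → g i ≤ f i := by
    intro i hi
    by_cases hi0 : i = 0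
    · subst hi0
      simp only [hg, dif_pos rfl]
      have := Finset.mem_range.mp hl0mem; omega
    · simp only [hg, dif_neg hi0, dif_pos hi]
      have := Finset.mem_Ico.mp (hlmmem (i-1) (by omega))
      have heq : i - 1 + 1 = i := by omega
      rw [heq] at this
      omega
  have hgmem' : ∀ i, 1 ≤ i → i ≤ n → f (i-1) < g i := by
    intro i hi1 hi
    simp only [hg, dif_neg (show ¬ i = 0 by omega), dif_pos hi]
    have := Finset.mem_Ico.mp (hlmmem (i-1) (by omega))
    omega
  refine ⟨g, ?_, ?_, ?_⟩
  · intro i hi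
    by_cases hin : i + 1 ≤ n
    · have hgi : g i ≤ f i := hgmem i (by omega)
      have := hgmem' (i+1) (by omega) hin
      simp only [show i+1-1 = i by omega] at this
      omega
    · -- i + 1 = n + 1, so g (i+1) = ll
      have hieq : i = n := by omega
      have hgi : g i ≤ f i := hgmem i (by omega)
      have hfl : f n < ll := by
        have := Finset.mem_Ico.mp hllmem; omega
      have hgeq : g (i+1) = ll := by
        simp only [hg, dif_neg (show ¬ i+1 = 0 by omega), dif_neg (show ¬ i+1 ≤ n by omega)]
      have hfi : f i = f n := by rw [hieq]
      rw [hgeq]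
      omega
  · intro i hi
    have := hgl i hi
    intro hz
    rw [hz, zero_mul] at this
    exact lt_irrefl 0 this
  · intro i hi
    exact mulneg (hgl i (by omega)) (hgl (i+1) (by omega)) (hσalt i hi)

open MvPolynomial in
/-- D'Angelo–Kos–Riehl degree estimate: if `p` is a nonconstant polynomial in two
variables with nonnegative coefficients such that `p - 1` is divisible by
`x + y - 1`, has degree `d` and `N` nonzero terms, then `d ≤ 2N - 3`. -/
theorem degree_estimate (p : MvPolynomial (Fin 2) ℝ)
    (hnn : ∀ m, 0 ≤ p.coeff m)
    (hdiv : (X 0 + X 1 - 1) ∣ (p - 1))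
    (hnc : p.totalDegree ≠ 0) :
    (p.totalDegree : ℤ) ≤ 2 * (p.support.card : ℤ) - 3 := by
  classical
  obtain ⟨r, hr⟩ := hdiv
  set d := p.totalDegree with hd
  have hd1 : 1 ≤ d := Nat.one_le_iff_ne_zero.mpr hnc
  -- monomial builder and basic facts
  set mk : ℕ → ℕ → (Fin 2 →₀ ℕ) := fun a b => Finsupp.single 0 a + Finsupp.single 1 b with hmk
  have mk0 : ∀ a b, mk a b 0 = a := by
    intro a b
    simp only [hmk, Finsupp.add_apply, Finsupp.single_eq_same,
      Finsupp.single_eq_of_ne' (show (1 : Fin 2) ≠ 0 by decide), add_zero]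
  have mk1 : ∀ a b, mk a b 1 = b := by
    intro a b
    simp only [hmk, Finsupp.add_apply, Finsupp.single_eq_same,
      Finsupp.single_eq_of_ne' (show (0 : Fin 2) ≠ 1 by decide), zero_add]
  have meq : ∀ m : Fin 2 →₀ ℕ, mk (m 0) (m 1) = m := by
    intro m
    ext i
    fin_cases i
    · rw [show ((⟨0, by omega⟩ : Fin 2)) = (0 : Fin 2) from rfl, mk0]
    · rw [show ((⟨1, by omega⟩ : Fin 2)) = (1 : Fin 2) from rfl, mk1]
  have hsupsum : ∀ m : Fin 2 →₀ ℕ, (∑ i ∈ m.support, m i) = m 0 + m 1 := by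
    intro m
    rw [Finset.sum_subset (Finset.subset_univ _)
      (fun i _ hi => Finsupp.notMem_support_iff.mp hi), Fin.sum_univ_two]
  -- coefficient relations
  have hr2 : p - 1 = X 0 * r + X 1 * r - r := by rw [hr]; ring
  have hco : ∀ m, coeff m p - coeff m (1 : MvPolynomial (Fin 2) ℝ)
      = coeff m (X 0 * r) + coeff m (X 1 * r) - coeff m r := by
    intro m
    have h := congrArg (coeff m) hr2
    simpa only [coeff_sub, coeff_add] using h
  have hXmul : ∀ (i : Fin 2) (m : Fin 2 →₀ ℕ),
      coeff m (X i * r) = if m i = 0 then 0 else coeff (m - Finsupp.single i 1) r := by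
    intro i m
    rw [coeff_X_mul' m i r]
    by_cases hmi : m i = 0
    · rw [if_neg (fun hmem => (Finsupp.mem_support_iff.mp hmem) hmi), if_pos hmi]
    · rw [if_pos (Finsupp.mem_support_iff.mpr hmi), if_neg hmi]
  have hsub0 : ∀ a b, mk (a+1) b - Finsupp.single 0 1 = mk a b := by
    intro a b
    ext i
    rw [Finsupp.tsub_apply]
    fin_cases i
    · rw [show ((⟨0, by omega⟩ : Fin 2)) = (0 : Fin 2) from rfl, mk0, mk0,
        Finsupp.single_eq_same]
      omega
    · rw [show ((⟨1, by omega⟩ : Fin 2)) = (1 : Fin 2) from rfl, mk1, mk1,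
        Finsupp.single_eq_of_ne' (show (0 : Fin 2) ≠ 1 by decide)]
      omega
  have hsub1 : ∀ a b, mk a (b+1) - Finsupp.single 1 1 = mk a b := by
    intro a b
    ext i
    rw [Finsupp.tsub_apply]
    fin_cases i
    · rw [show ((⟨0, by omega⟩ : Fin 2)) = (0 : Fin 2) from rfl, mk0, mk0,
        Finsupp.single_eq_of_ne' (show (1 : Fin 2) ≠ 0 by decide)]
      omega
    · rw [show ((⟨1, by omega⟩ : Fin 2)) = (1 : Fin 2) from rfl, mk1, mk1,
        Finsupp.single_eq_same]
      omega
  have hmkne : ∀ a b, a + b ≠ 0 → mk a b ≠ 0 := by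
    intro a b hab h
    have h0 := congrArg (fun g : Fin 2 →₀ ℕ => g 0) h
    have h1 := congrArg (fun g : Fin 2 →₀ ℕ => g 1) h
    simp only [mk0, mk1, Finsupp.coe_zero, Pi.zero_apply] at h0 h1
    omega
  set rc : ℕ → ℕ → ℝ := fun a b => coeff (mk a b) r with hrc
  set pcf : ℕ → ℕ → ℝ := fun a b => coeff (mk a b) p with hpcf
  have hpcnn : ∀ a b, 0 ≤ pcf a b := fun a b => hnn _
  have h1 : ∀ a b, pcf (a+1) (b+1) = rc a (b+1) + rc (a+1) b - rc (a+1) (b+1) := by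
    intro a b
    have h := hco (mk (a+1) (b+1))
    rw [hXmul 0, hXmul 1, mk0, mk1, if_neg (Nat.succ_ne_zero a), if_neg (Nat.succ_ne_zero b),
      hsub0, hsub1, coeff_one, if_neg (fun hz => hmkne (a+1) (b+1) (by omega) hz.symm)] at h
    simp only [hrc, hpcf]
    linarith [h]
  have h2 : ∀ a, pcf (a+1) 0 = rc a 0 - rc (a+1) 0 := by
    intro a
    have h := hco (mk (a+1) 0)
    rw [hXmul 0, hXmul 1, mk0, mk1, if_neg (Nat.succ_ne_zero a), if_pos rfl,
      hsub0, coeff_one, if_neg (fun hz => hmkne (a+1) 0 (by omega) hz.symm)] at h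
    simp only [hrc, hpcf]
    linarith [h]
  have h3 : ∀ b, pcf 0 (b+1) = rc 0 b - rc 0 (b+1) := by
    intro b
    have h := hco (mk 0 (b+1))
    rw [hXmul 0, hXmul 1, mk0, mk1, if_pos rfl, if_neg (Nat.succ_ne_zero b),
      hsub1, coeff_one, if_neg (fun hz => hmkne 0 (b+1) (by omega) hz.symm)] at h
    simp only [hrc, hpcf]
    linarith [h]
  have hmk00 : mk 0 0 = 0 := by
    ext i
    fin_cases i
    · rw [show ((⟨0, by omega⟩ : Fin 2)) = (0 : Fin 2) from rfl, mk0]; rfl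
    · rw [show ((⟨1, by omega⟩ : Fin 2)) = (1 : Fin 2) from rfl, mk1]; rfl
  have h0 : pcf 0 0 - 1 = - rc 0 0 := by
    have h := hco (mk 0 0)
    rw [hXmul 0, hXmul 1, mk0, mk1, if_pos rfl, if_pos rfl, coeff_one,
      if_pos (by rw [hmk00])] at h
    simp only [hrc, hpcf]
    linarith [h]
  -- the alternated diagonal sequences of r and p
  set Sf : ℕ → ℕ → ℝ := fun j k => if k ≤ j then (-1 : ℝ)^k * rc k (j - k) else 0 with hSf
  set Qa : ℕ → ℕ → ℝ := fun j k => if k ≤ j then (-1 : ℝ)^k * pcf k (j - k) else 0 with hQa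
  have master : ∀ j k, Sf (j+1) k = Dop (Sf j) k - Qa (j+1) k := by
    intro j k
    match k with
    | 0 =>
      show Sf (j+1) 0 = Sf j 0 - Qa (j+1) 0
      simp only [hSf, hQa, if_pos (Nat.zero_le _), pow_zero, one_mul, Nat.sub_zero]
      rw [h3 j]
      ring
    | l+1 =>
      show Sf (j+1) (l+1) = (Sf j (l+1) - Sf j l) - Qa (j+1) (l+1)
      by_cases hc1 : l + 1 ≤ j
      · have e2 : j - l = (j - (l+1)) + 1 := by omega
        have e3 : j + 1 - (l+1) = (j - (l+1)) + 1 := by omega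
        simp only [hSf, hQa, if_pos (show l+1 ≤ j+1 by omega), if_pos hc1,
          if_pos (show l ≤ j by omega)]
        rw [e2, e3, h1 l (j - (l+1)), pow_succ]
        ring
      · by_cases hc2 : l = j
        · subst hc2
          simp only [hSf, hQa, if_neg (show ¬ l+1 ≤ l by omega),
            if_pos (show l+1 ≤ l+1 by omega), if_pos (le_refl l), Nat.sub_self,
            show l + 1 - (l+1) = 0 by omega]
          rw [h2 l, pow_succ]
          ring
        · simp only [hSf, hQa, if_neg (show ¬ l+1 ≤ j+1 by omega),
            if_neg (show ¬ l+1 ≤ j by omega), if_neg (show ¬ l ≤ j by omega)]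
          ring
  -- diagonals of r vanish from degree d on
  have hvanish : ∀ j, r.totalDegree < j → ∀ k, Sf j k = 0 := by
    intro j hj k
    simp only [hSf]
    by_cases hk : k ≤ j
    · rw [if_pos hk]
      have hz : rc k (j - k) = 0 := by
        simp only [hrc]
        apply coeff_eq_zero_of_totalDegree_lt
        rw [hsupsum, mk0, mk1]
        omega
      rw [hz, mul_zero]
    · rw [if_neg hk]
  have hQzero : ∀ j, d < j → ∀ k, Qa j k = 0 := by
    intro j hj k
    simp only [hQa]
    by_cases hk : k ≤ j
    · rw [if_pos hk]
      have hz : pcf k (j - k) = 0 := by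
        simp only [hpcf]
        apply coeff_eq_zero_of_totalDegree_lt
        rw [hsupsum, mk0, mk1, ← hd]
        omega
      rw [hz, mul_zero]
    · rw [if_neg hk]
  have hDzero : ∀ (g : ℕ → ℝ), (∀ k, Dop g k = 0) → ∀ k, g k = 0 := by
    intro g hg k
    induction k with
    | zero => simpa [Dop] using hg 0
    | succ k ih =>
      have := hg (k+1)
      simp only [Dop] at this
      linarith
  have main0 : ∀ t j, d ≤ j → r.totalDegree + 1 ≤ j + t → ∀ k, Sf j k = 0 := by
    intro t
    induction t with
    | zero => intro j hj hjt k; exact hvanish j (by omega) k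
    | succ t ih =>
      intro j hj hjt k
      by_cases hcase : r.totalDegree < j
      · exact hvanish j hcase k
      · have hnext : ∀ k, Sf (j+1) k = 0 := fun k => ih (j+1) (by omega) (by omega) k
        have hQ : ∀ k, Qa (j+1) k = 0 := hQzero (j+1) (by omega)
        have hDz : ∀ k, Dop (Sf j) k = 0 := by
          intro k
          have hmm := master j k
          rw [hnext k, hQ k] at hmm
          linarith
        exact hDzero (Sf j) hDz k
  have hSd : ∀ k, Sf d k = 0 := main0 (r.totalDegree + 1) d le_rfl (by omega)
  have hDQ : ∀ k, Dop (Sf (d-1)) k = Qa d k := by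
    intro k
    have e : d - 1 + 1 = d := by omega
    have hmm := master (d-1) k
    rw [e, hSd k] at hmm
    linarith
  -- a top-degree monomial
  have hpne : p ≠ 0 := by
    intro h
    apply hnc
    rw [hd, h, totalDegree_zero]
  have hsupne : p.support.Nonempty := support_nonempty.mpr hpne
  have htop : ∃ k, k ≤ d ∧ pcf k (d - k) ≠ 0 := by
    obtain ⟨mtop, hmem, hsup⟩ := Finset.exists_mem_eq_sup p.support hsupne
      (fun (m : Fin 2 →₀ ℕ) => m.sum fun _ e => e)
    have hdd : d = mtop 0 + mtop 1 := by
      rw [hd, totalDegree, hsup, Finsupp.sum, hsupsum]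
    refine ⟨mtop 0, by omega, ?_⟩
    have e : d - mtop 0 = mtop 1 := by omega
    rw [e]
    simp only [hpcf]
    rw [meq mtop]
    exact mem_support_iff.mp hmem
  -- the constant coefficient of p is < 1, hence rc 0 0 ≠ 0
  have heval : (eval (fun _ : Fin 2 => (1/2 : ℝ))) p = 1 := by
    have h := congrArg (eval (fun _ : Fin 2 => (1/2 : ℝ))) hr
    simp only [map_sub, map_add, map_one, map_mul, eval_X] at h
    norm_num at h
    linarith
  have hrc00 : 0 < rc 0 0 := by
    have hpc00 : pcf 0 0 < 1 := by
      obtain ⟨ktop, hk, hkne⟩ := htop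
      set ms : Fin 2 →₀ ℕ := mk ktop (d - ktop) with hms
      have hmsmem : ms ∈ p.support := mem_support_iff.mpr hkne
      have hmsne : ms ≠ 0 := hmkne ktop (d - ktop) (by omega)
      have htpos : 0 < coeff ms p * ∏ i, (1/2 : ℝ) ^ ms i := by
        apply mul_pos
        · exact lt_of_le_of_ne (hnn ms) (Ne.symm hkne)
        · positivity
      rw [eval_eq' (fun _ : Fin 2 => (1/2 : ℝ)) p] at heval
      by_cases h0 : (0 : Fin 2 →₀ ℕ) ∈ p.support
      · have hsubset : ({(0 : Fin 2 →₀ ℕ), ms} : Finset (Fin 2 →₀ ℕ)) ⊆ p.support := by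
          intro x hx
          simp only [Finset.mem_insert, Finset.mem_singleton] at hx
          rcases hx with h | h
          · rw [h]; exact h0
          · rw [h]; exact hmsmem
        have hle : ∑ m ∈ ({(0 : Fin 2 →₀ ℕ), ms} : Finset (Fin 2 →₀ ℕ)),
            (coeff m p * ∏ i, (1/2 : ℝ) ^ m i) ≤ ∑ m ∈ p.support, (coeff m p * ∏ i, (1/2 : ℝ) ^ m i) := by
          apply Finset.sum_le_sum_of_subset_of_nonneg hsubset
          intro m _ _
          apply mul_nonneg (hnn m)
          positivity
        rw [Finset.sum_pair (Ne.symm hmsne)] at hle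
        have h00 : coeff (0 : Fin 2 →₀ ℕ) p * ∏ i, (1/2 : ℝ) ^ (0 : Fin 2 →₀ ℕ) i
            = coeff (0 : Fin 2 →₀ ℕ) p := by
          simp
        rw [h00, heval] at hle
        simp only [hpcf, hmk00]
        linarith
      · simp only [hpcf, hmk00]
        rw [notMem_support_iff.mp h0]
        norm_num
    linarith [h0]
  -- diagonal d of r vanishes coefficientwise
  have hrcd : ∀ k, k ≤ d → rc k (d - k) = 0 := by
    intro k hk
    have := hSd k
    simp only [hSf, if_pos hk] at this
    rcases mul_eq_zero.mp this with h | h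
    · exact absurd h (pow_ne_zero _ (by norm_num))
    · exact h
  have hne1pow : ∀ k : ℕ, ((-1 : ℝ))^k ≠ 0 := fun k => pow_ne_zero _ (by norm_num)
  have hSd1ne : ∃ k, Sf (d-1) k ≠ 0 := by
    obtain ⟨ktop, hk, hkne⟩ := htop
    by_contra hz
    push_neg at hz
    have hDz : ∀ k, Dop (Sf (d-1)) k = 0 := by
      intro k
      match k with
      | 0 => simp [Dop, hz]
      | l+1 => simp [Dop, hz]
    have hq := hDQ ktop
    rw [hDz ktop] at hq
    simp only [hQa, if_pos hk] at hq
    exact hkne (by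
      rcases mul_eq_zero.mp hq.symm with h | h
      · exact absurd h (hne1pow ktop)
      · exact h)
  -- no resurrection: every diagonal below d is nonzero
  have hW : ∀ j, j ≤ d - 1 → ∃ k, Sf j k ≠ 0 := by
    intro j hj
    by_contra hz
    push_neg at hz
    have hrcj : ∀ k, k ≤ j → rc k (j - k) = 0 := by
      intro k hk
      have := hz k
      simp only [hSf, if_pos hk] at this
      rcases mul_eq_zero.mp this with h | h
      · exact absurd h (hne1pow k)
      · exact h
    have hneg : ∀ i, j ≤ i → i ≤ d - 1 → ∀ k, k ≤ i → rc k (i - k) ≤ 0 := by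
      have hind := Nat.le_induction (m := j)
        (P := fun i (_ : j ≤ i) => i ≤ d - 1 → ∀ k, k ≤ i → rc k (i - k) ≤ 0)
        (by intro _ k hk; rw [hrcj k hk])
        (by
          intro i hji ih hi1 k hk
          have hihyp : ∀ k, k ≤ i → rc k (i - k) ≤ 0 := ih (by omega)
          match k with
          | 0 =>
            have e : i + 1 - 0 = i + 1 := by omega
            rw [e]
            have := h3 i
            have h1' := hihyp 0 (by omega)
            rw [Nat.sub_zero] at h1'
            have := hpcnn 0 (i+1)
            linarith
          | a+1 =>
            by_cases hai : a + 1 ≤ i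
            · have e1 : i + 1 - (a+1) = (i - (a+1)) + 1 := by omega
              rw [e1]
              have hh := h1 a (i - (a+1))
              have hr1 : rc a ((i - (a+1)) + 1) ≤ 0 := by
                have := hihyp a (by omega)
                have e : i - a = (i - (a+1)) + 1 := by omega
                rwa [e] at this
              have hr2 : rc (a+1) (i - (a+1)) ≤ 0 := hihyp (a+1) hai
              have := hpcnn (a+1) ((i - (a+1)) + 1)
              linarith
            · have hai' : a = i := by omega
              subst hai'
              have e : a + 1 - (a+1) = 0 := by omega
              rw [e]
              have hh := h2 a
              have hr1 : rc a 0 ≤ 0 := by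
                have := hihyp a (by omega)
                rwa [Nat.sub_self] at this
              have := hpcnn (a+1) 0
              linarith)
      intro i hji hi1 k hk
      exact hind i hji hi1 k hk
    obtain ⟨k1, hk1⟩ := hSd1ne
    have hk1le : k1 ≤ d - 1 := by
      by_contra hh
      apply hk1
      simp only [hSf]
      rw [if_neg hh]
    have hrck1 : rc k1 (d - 1 - k1) ≠ 0 := by
      intro hh
      apply hk1
      simp only [hSf, if_pos hk1le]
      rw [hh, mul_zero]
    have hrck1' : rc k1 (d - 1 - k1) < 0 :=
      lt_of_le_of_ne (hneg (d-1) hj le_rfl k1 hk1le) hrck1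
    match k1, hk1le, hrck1' with
    | 0, hk1le, hrck1' =>
      have hh := h3 (d-1)
      have e : d - 1 + 1 = d := by omega
      rw [e] at hh
      have hz : rc 0 d = 0 := by
        have := hrcd 0 (by omega)
        rwa [Nat.sub_zero] at this
      have := hpcnn 0 d
      rw [Nat.sub_zero] at hrck1'
      linarith
    | a+1, hk1le, hrck1' =>
      have hh := h1 a (d - 1 - (a+1))
      have e1 : (d - 1 - (a+1)) + 1 = d - (a+1) := by omega
      have hz : rc (a+1) ((d - 1 - (a+1)) + 1) = 0 := by
        have := hrcd (a+1) (by omega)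
        rwa [← e1] at this
      have hr1 : rc a ((d - 1 - (a+1)) + 1) ≤ 0 := by
        have := hneg (d-1) hj le_rfl a (by omega)
        have e2 : d - 1 - a = (d - 1 - (a+1)) + 1 := by omega
        rwa [e2] at this
      have := hpcnn (a+1) ((d - 1 - (a+1)) + 1)
      linarith
  -- counting terms of p per diagonal
  set Ncnt : ℕ → ℕ := fun j => (p.support.filter (fun m => m 0 + m 1 = j)).card with hNcnt
  have hFle : ∀ j, ((Finset.range (j+1)).filter (fun k => pcf k (j - k) ≠ 0)).card ≤ Ncnt j := by
    intro j
    apply Finset.card_le_card_of_injOn (fun k => mk k (j - k))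
    · intro k hk
      simp only [Finset.mem_coe, Finset.mem_filter, Finset.mem_range] at hk
      simp only [hNcnt, Finset.mem_coe, Finset.mem_filter]
      constructor
      · exact mem_support_iff.mpr hk.2
      · rw [mk0, mk1]; omega
    · intro k1 hk1 k2 hk2 he
      have := congrArg (fun g : Fin 2 →₀ ℕ => g 0) he
      simpa only [mk0] using this
  -- the main invariant
  have key : ∀ j, j ≤ d - 1 →
      ∃ v, AChain (Sf j) v ∧ j ≤ v + 2 * ∑ i ∈ Finset.Icc 1 j, Ncnt i := by
    intro j
    induction j with
    | zero =>
      intro _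
      refine ⟨0, ⟨fun _ => 0, fun i hi => by omega, fun i _ => ?_, fun i hi => by omega⟩, by omega⟩
      simp only [hSf, if_pos (le_refl 0), pow_zero, one_mul, Nat.sub_zero]
      linarith [hrc00]
    | succ j ih =>
      intro hj
      obtain ⟨v, hch, hcnt⟩ := ih (by omega)
      have hfin : ∀ k, j + 1 ≤ k → Sf j k = 0 := by
        intro k hk
        simp only [hSf]
        rw [if_neg (by omega)]
      have hDch := achain_D (j+1) hfin hch
      set F : Finset ℕ := (Finset.range (j+2)).filter (fun k => pcf k (j+1-k) ≠ 0) with hF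
      have hagree : ∀ k, k ∉ F → Sf (j+1) k = Dop (Sf j) k := by
        intro k hk
        have hQ0 : Qa (j+1) k = 0 := by
          simp only [hQa]
          by_cases hkj : k ≤ j+1
          · rw [if_pos hkj]
            have hz : pcf k (j+1-k) = 0 := by
              by_contra hne
              exact hk (by
                simp only [hF, Finset.mem_filter, Finset.mem_range]
                exact ⟨by omega, hne⟩)
            rw [hz, mul_zero]
          · rw [if_neg hkj]
        rw [master j k, hQ0, sub_zero]
      have hnz : ∃ k, Sf (j+1) k ≠ 0 := hW (j+1) hj
      have hch' := achain_sub F (Dop (Sf j)) (Sf (j+1)) (v+1) hagree hDch hnz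
      refine ⟨v + 1 - 2 * F.card, hch', ?_⟩
      have hsplit : ∑ i ∈ Finset.Icc 1 (j+1), Ncnt i
          = (∑ i ∈ Finset.Icc 1 j, Ncnt i) + Ncnt (j+1) :=
        Finset.sum_Icc_succ_top (by omega) _
      have hcard : F.card ≤ Ncnt (j+1) := hFle (j+1)
      omega
  -- endgame
  obtain ⟨v, hch, hcnt⟩ := key (d-1) le_rfl
  have hfin : ∀ k, d ≤ k → Sf (d-1) k = 0 := by
    intro k hk
    simp only [hSf]
    rw [if_neg (by omega)]
  obtain ⟨f, hf1, hf2, hf3⟩ := achain_D d hfin hch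
  have hel : ∀ i, i ≤ v+1 → f i ≤ d ∧ pcf (f i) (d - f i) ≠ 0 := by
    intro i hi
    have hne := hf2 i hi
    rw [hDQ (f i)] at hne
    simp only [hQa] at hne
    by_cases hfd : f i ≤ d
    · refine ⟨hfd, ?_⟩
      rw [if_pos hfd] at hne
      intro hzz
      rw [hzz, mul_zero] at hne
      exact hne rfl
    · rw [if_neg hfd] at hne
      exact absurd rfl hne
  have hNd : v + 2 ≤ Ncnt d := by
    have hcard : (Finset.range (v+2)).card ≤ Ncnt d := by
      apply Finset.card_le_card_of_injOn (fun i => mk (f i) (d - f i))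
      · intro i hi
        simp only [Finset.mem_coe, Finset.mem_range] at hi
        obtain ⟨hle, hne⟩ := hel i (by omega)
        simp only [hNcnt, Finset.mem_coe, Finset.mem_filter]
        constructor
        · exact mem_support_iff.mpr hne
        · rw [mk0, mk1]; omega
      · intro i1 hi1 i2 hi2 he
        simp only [Finset.coe_range, Set.mem_Iio] at hi1 hi2
        have hfe : f i1 = f i2 := by
          have := congrArg (fun g : Fin 2 →₀ ℕ => g 0) he
          simpa only [mk0] using this
        by_contra hneq
        rcases Nat.lt_or_ge i1 i2 with h | h
        · have := fmono hf1 i1 i2 h (by omega); omega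
        · have := fmono hf1 i2 i1 (by omega) (by omega); omega
    simpa using hcard
  have hsum_le : ∑ i ∈ Finset.Icc 1 d, Ncnt i ≤ p.support.card := by
    simp only [hNcnt]
    have hdisj : ∀ x ∈ Finset.Icc 1 d, ∀ y ∈ Finset.Icc 1 d, x ≠ y →
        Disjoint (p.support.filter (fun m => m 0 + m 1 = x))
          (p.support.filter (fun m => m 0 + m 1 = y)) := by
      intro x _ y _ hxy
      rw [Finset.disjoint_left]
      intro m hmx hmy
      simp only [Finset.mem_filter] at hmx hmy
      omega
    rw [← Finset.card_biUnion hdisj]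
    apply Finset.card_le_card
    intro m hm
    simp only [Finset.mem_biUnion, Finset.mem_filter] at hm
    obtain ⟨i, _, hmi, _⟩ := hm
    exact hmi
  have hsplit : ∑ i ∈ Finset.Icc 1 d, Ncnt i
      = (∑ i ∈ Finset.Icc 1 (d-1), Ncnt i) + Ncnt d := by
    have e : d = (d - 1) + 1 := by omega
    rw [e, Finset.sum_Icc_succ_top (by omega)]
    rw [show (d - 1) + 1 - 1 = d - 1 by omega]
  have hfinal : d + 3 ≤ 2 * p.support.card := by omega
  rw [hd] at hfinal
  omega
end

section
/- Let n ≥ 2 and d ≥ 1. The polynomial p(x₁,…,xₙ) = (x₁+⋯+x_{n-1})·(1 + xₙ + xₙ² + ⋯ + xₙ^{d-1}) + xₙ^d has degree d, all coefficients nonnegative, exactly d(n-1)+1 nonzero monomial terms, and satisfies p(x) = 1 whenever x₁ + ⋯ + xₙ = 1. -/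
/-!
Multiplying out, `p` is the sum of the pairwise distinct monomials `xⱼ xₙ^i` (`j ≤ n-1`,
`i < d`) and `xₙ^d`, each with coefficient `1`; this gives the degree, the coefficients and the
number of terms. On the hyperplane `x₁ + ⋯ + x_{n-1} = 1 - xₙ`, so `p = 1` is the telescoping
identity `(1 - xₙ)(1 + xₙ + ⋯ + xₙ^{d-1}) = 1 - xₙ^d`.
-/

namespace MvPolynomial

open Finset

section Whitney

variable {σ R : Type*} [CommSemiring R]

noncomputable def whitneyPoly (J : Finset σ) (v : σ) (d : ℕ) : MvPolynomial σ R :=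
  (∑ j ∈ J, X j) * (∑ i ∈ range d, X v ^ i) + X v ^ d

noncomputable def whitneyExponent (v : σ) (q : σ × ℕ) : σ →₀ ℕ :=
  Finsupp.single q.1 1 + Finsupp.single v q.2

variable {J : Finset σ} {v : σ} (d : ℕ)

lemma whitneyExponent_injOn (hv : v ∉ J) :
    Set.InjOn (whitneyExponent v) ↑(J ×ˢ range d) := by
  rintro ⟨j, i⟩ hji ⟨k, l⟩ hkl hjk
  have hj : j ≠ v := ne_of_mem_of_not_mem (mem_product.1 hji).1 hv
  have hk : k ≠ v := ne_of_mem_of_not_mem (mem_product.1 hkl).1 hv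
  have hil : i = l := by
    simpa [whitneyExponent, Finsupp.single_apply, hj, hk] using DFunLike.congr_fun hjk v
  subst hil
  have : Finsupp.single j 1 = Finsupp.single k 1 := add_right_cancel hjk
  rw [Finsupp.single_left_injective one_ne_zero this]

lemma degree_whitneyExponent (q : σ × ℕ) : (whitneyExponent v q).degree = q.2 + 1 := by
  simp [whitneyExponent, add_comm]

variable [DecidableEq σ]

noncomputable def whitneyExponents (J : Finset σ) (v : σ) (d : ℕ) : Finset (σ →₀ ℕ) :=
  insert (Finsupp.single v d) ((J ×ˢ range d).image (whitneyExponent v))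

lemma single_notMem_image_whitneyExponent (hv : v ∉ J) :
    Finsupp.single v d ∉ (J ×ˢ range d).image (whitneyExponent v) := by
  simp only [mem_image, mem_product, not_exists, not_and]
  rintro ⟨j, i⟩ ⟨hj, -⟩ h
  have hjv : j ≠ v := ne_of_mem_of_not_mem hj hv
  simpa [whitneyExponent, Finsupp.single_apply, hjv, hjv.symm] using DFunLike.congr_fun h j

lemma card_whitneyExponents (hv : v ∉ J) : #(whitneyExponents J v d) = d * #J + 1 := by
  rw [whitneyExponents, card_insert_of_notMem (single_notMem_image_whitneyExponent d hv),
    card_image_of_injOn (whitneyExponent_injOn d hv), card_product, card_range, mul_comm]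

lemma whitneyPoly_eq_sum_monomial (hv : v ∉ J) :
    (whitneyPoly J v d : MvPolynomial σ R) = ∑ m ∈ whitneyExponents J v d, monomial m 1 := by
  rw [whitneyExponents, sum_insert (single_notMem_image_whitneyExponent d hv),
    sum_image (whitneyExponent_injOn d hv), whitneyPoly, add_comm, X_pow_eq_monomial,
    sum_mul_sum, sum_product]
  refine congrArg _ (sum_congr rfl fun j _ => sum_congr rfl fun i _ => ?_)
  rw [whitneyExponent, X, X_pow_eq_monomial, monomial_mul, one_mul]

lemma coeff_whitneyPoly (hv : v ∉ J) (m : σ →₀ ℕ) :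
    coeff m (whitneyPoly J v d : MvPolynomial σ R) =
      if m ∈ whitneyExponents J v d then 1 else 0 := by
  simp [whitneyPoly_eq_sum_monomial d hv, coeff_sum, coeff_monomial]

lemma support_whitneyPoly [Nontrivial R] (hv : v ∉ J) :
    (whitneyPoly J v d : MvPolynomial σ R).support = whitneyExponents J v d := by
  ext m
  simp [coeff_whitneyPoly d hv]

lemma totalDegree_whitneyPoly [Nontrivial R] (hv : v ∉ J) :
    (whitneyPoly J v d : MvPolynomial σ R).totalDegree = d := by
  have hsupp := support_whitneyPoly (R := R) d hv
  refine le_antisymm (Finset.sup_le fun m hm => ?_) ?_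
  · show m.degree ≤ d
    rw [hsupp, whitneyExponents, mem_insert, mem_image] at hm
    rcases hm with rfl | ⟨⟨j, i⟩, hji, rfl⟩
    · rw [Finsupp.degree_single]
    · rw [degree_whitneyExponent]
      exact mem_range.1 (mem_product.1 hji).2
  · have hmem : Finsupp.single v d ∈ (whitneyPoly J v d : MvPolynomial σ R).support :=
      hsupp ▸ mem_insert_self _ _
    simpa using le_totalDegree hmem

end Whitney

lemma eval_whitneyPoly {σ R : Type*} [CommRing R] (J : Finset σ) (v : σ) (d : ℕ)
    (x : σ → R) (hx : ∑ j ∈ J, x j + x v = 1) : eval x (whitneyPoly J v d) = 1 := by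
  rw [whitneyPoly, map_add, map_mul, map_sum, map_sum, map_pow]
  simp only [map_pow, eval_X, eq_sub_of_add_eq hx, mul_neg_geom_sum, sub_add_cancel]

end MvPolynomial

lemma Fin.filter_val_lt_eq_univ_erase {n : ℕ} (xn : Fin n) (hxn : (xn : ℕ) = n - 1) :
    Finset.univ.filter (fun j : Fin n => (j : ℕ) < n - 1) = Finset.univ.erase xn := by
  ext j
  simp only [Finset.mem_filter, Finset.mem_univ, true_and, Finset.mem_erase, and_true, ne_eq,
    Fin.ext_iff, hxn]
  omega

open MvPolynomial in
theorem whitney_polynomial_general (n d : ℕ) :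
    ∀ xn : Fin n, (xn : ℕ) = n - 1 →
    ∀ p : MvPolynomial (Fin n) ℝ,
      p = (∑ j ∈ Finset.univ.filter (fun j : Fin n => (j : ℕ) < n - 1), X j)
            * (∑ i ∈ Finset.range d, (X xn) ^ i) + (X xn) ^ d →
      p.totalDegree = d ∧
      (∀ m, 0 ≤ p.coeff m) ∧
      p.support.card = d * (n - 1) + 1 ∧
      (∀ x : Fin n → ℝ, (∑ j, x j) = 1 → MvPolynomial.eval x p = 1) := by
  intro xn hxn p hp
  rw [Fin.filter_val_lt_eq_univ_erase xn hxn] at hp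
  obtain rfl : p = whitneyPoly (Finset.univ.erase xn) xn d := hp
  have hv : xn ∉ Finset.univ.erase xn := Finset.notMem_erase xn _
  refine ⟨totalDegree_whitneyPoly d hv, fun m => ?_, ?_, fun x hx => ?_⟩
  · rw [coeff_whitneyPoly d hv]
    split_ifs <;> norm_num
  · rw [support_whitneyPoly d hv, card_whitneyExponents d hv,
      Finset.card_erase_of_mem (Finset.mem_univ xn), Finset.card_univ, Fintype.card_fin]
  · exact eval_whitneyPoly _ _ d x (by rwa [Finset.sum_erase_add _ _ (Finset.mem_univ xn)])

open MvPolynomial in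
/-- The generalized Whitney polynomial
`p(x) = (x₁+⋯+x_{n-1})(1 + xₙ + ⋯ + xₙ^{d-1}) + xₙ^d` has degree `d`,
nonnegative coefficients, exactly `d(n-1)+1` nonzero terms, and equals `1`
on the hyperplane `x₁ + ⋯ + xₙ = 1`. -/
theorem whitney_polynomial (n d : ℕ) (hn : 2 ≤ n) (hd : 1 ≤ d) :
    ∀ xn : Fin n, (xn : ℕ) = n - 1 →
    ∀ p : MvPolynomial (Fin n) ℝ,
      p = (∑ j ∈ Finset.univ.filter (fun j : Fin n => (j : ℕ) < n - 1), X j)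
            * (∑ i ∈ Finset.range d, (X xn) ^ i) + (X xn) ^ d →
      p.totalDegree = d ∧
      (∀ m, 0 ≤ p.coeff m) ∧
      p.support.card = d * (n - 1) + 1 ∧
      (∀ x : Fin n → ℝ, (∑ j, x j) = 1 → MvPolynomial.eval x p = 1) :=
  whitney_polynomial_general n d
end

section
/- Suppose h is a polynomial in two real variables with all nonnegative coefficients, h is not constant, and h(x, 1-x) = 1 for all x. Then h(1,1) > 1. -/
/-!
On the line `x + y = 1` lies the point `(1/2, 1/2)`, so `h(1/2, 1/2) = 1`. Evaluating at
`(t, t)` multiplies the coefficient of a monomial of degree `k` by `t ^ k`; for `t = 1/2` this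
shrinks every (nonnegative) coefficient and strictly shrinks the positive coefficient of some
monomial of positive degree, which exists because `h` is not constant. Hence `h(1, 1) > h(1/2, 1/2)`.
-/

namespace MvPolynomial

theorem eval_const_eq_sum {σ R : Type*} [CommSemiring R] (t : R) (p : MvPolynomial σ R) :
    eval (fun _ => t) p = ∑ d ∈ p.support, p.coeff d * t ^ d.degree := by
  simp only [eval_eq, Finset.prod_pow_eq_pow_sum, Finsupp.degree_apply]

theorem exists_mem_support_degree_ne_zero {σ R : Type*} [CommSemiring R]
    {p : MvPolynomial σ R} (hp : p.totalDegree ≠ 0) : ∃ d ∈ p.support, d.degree ≠ 0 := by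
  contrapose! hp
  exact (totalDegree_eq_zero_iff σ p).2 fun d hd i => by
    simp [(Finsupp.degree_eq_zero_iff d).1 (hp d hd)]

theorem eval_const_lt_eval_one {σ R : Type*} [CommSemiring R] [PartialOrder R]
    [IsStrictOrderedRing R] {p : MvPolynomial σ R} (hnn : ∀ d, 0 ≤ p.coeff d)
    (hp : p.totalDegree ≠ 0) {t : R} (ht₀ : 0 ≤ t) (ht₁ : t < 1) :
    eval (fun _ => t) p < eval (fun _ => 1) p := by
  simp only [eval_const_eq_sum, one_pow, mul_one]
  obtain ⟨d, hd, hdeg⟩ := exists_mem_support_degree_ne_zero hp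
  have hd_pos : 0 < p.coeff d := (hnn d).lt_of_ne' (mem_support_iff.1 hd)
  exact Finset.sum_lt_sum (fun m _ => mul_le_of_le_one_right (hnn m) (pow_le_one₀ ht₀ ht₁.le))
    ⟨d, hd, mul_lt_of_lt_one_right hd_pos (pow_lt_one₀ ht₀ ht₁ hdeg)⟩

end MvPolynomial

open MvPolynomial in
/-- A nonconstant polynomial with nonnegative coefficients that equals `1`
on the line `x + y = 1` has coefficient sum `h(1,1)` strictly greater than `1`. -/
theorem coefficient_sum_gt_one (h : MvPolynomial (Fin 2) ℝ)
    (hnn : ∀ m, 0 ≤ h.coeff m)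
    (hnc : h.totalDegree ≠ 0)
    (hline : ∀ x : ℝ, MvPolynomial.eval ![x, 1 - x] h = 1) :
    1 < MvPolynomial.eval ![(1 : ℝ), 1] h := by
  have hmid : ![(1 / 2 : ℝ), 1 - 1 / 2] = fun _ => 1 / 2 := by
    ext i; fin_cases i <;> norm_num
  have hone : ![(1 : ℝ), 1] = fun _ => 1 := by
    ext i; fin_cases i <;> rfl
  calc 1 = eval (fun _ => 1 / 2) h := by rw [← hmid, hline]
    _ < eval (fun _ => 1) h := eval_const_lt_eval_one hnn hnc (by norm_num) (by norm_num)
    _ = eval ![1, 1] h := by rw [hone]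
end

section
/- For λ ∈ (0,3], the polynomial f_λ(x,y) = x³ + y³ + (3-λ)xy + λ·xy·(x³ + 3xy + y³) has all nonnegative coefficients, satisfies f_λ(x,1-x) = 1 for all x, and has degree 5; moreover f_λ(1,1) = 5 + 4λ. -/
/-!
Expanding, `f_λ = x³ + y³ + (3 - λ)xy + λx⁴y + 3λx²y² + λxy⁴`, whose coefficients are
`1, 1, 3 - λ, λ, 3λ, λ`; the monomial `x⁴y` forces degree `5` once `λ ≠ 0`. On the line
`x + y = 1` we have `x³ + 3xy + y³ = (x + y)³ = 1`, so the terms `-λxy` and `λxy · 1` cancel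
and `f_λ = 1`.
-/

open MvPolynomial Finsupp

theorem C_mul_X_pow_mul_X_pow_eq_monomial {σ R : Type*} [CommSemiring R] (i j : σ) (c : R)
    (a b : ℕ) : C c * X i ^ a * X j ^ b = monomial (single i a + single j b) c := by
  rw [C_mul_X_pow_eq_monomial, X_pow_eq_monomial, monomial_mul, mul_one]

theorem totalDegree_monomial_single_add_single_le {σ R : Type*} [CommSemiring R] (i j : σ)
    (c : R) (a b : ℕ) : (monomial (single i a + single j b) c).totalDegree ≤ a + b :=
  (totalDegree_monomial_le _ _).trans_eq (by simp [sum_add_index'])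

theorem totalDegree_add_le_of_le {σ R : Type*} [CommSemiring R] {p q : MvPolynomial σ R}
    {n : ℕ} (hp : p.totalDegree ≤ n) (hq : q.totalDegree ≤ n) : (p + q).totalDegree ≤ n :=
  (totalDegree_add p q).trans (max_le hp hq)

noncomputable def familyPoly (l : ℝ) : MvPolynomial (Fin 2) ℝ :=
  X 0 ^ 3 + X 1 ^ 3 + C (3 - l) * (X 0 * X 1)
    + C l * (X 0 * X 1) * (X 0 ^ 3 + C 3 * (X 0 * X 1) + X 1 ^ 3)

theorem familyPoly_eq_sum_monomial (l : ℝ) :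
    familyPoly l = monomial (single 0 3 + single 1 0) 1 + monomial (single 0 0 + single 1 3) 1
      + monomial (single 0 1 + single 1 1) (3 - l) + monomial (single 0 4 + single 1 1) l
      + monomial (single 0 2 + single 1 2) (3 * l) + monomial (single 0 1 + single 1 4) l := by
  simp only [← C_mul_X_pow_mul_X_pow_eq_monomial, familyPoly, map_one, map_mul, map_ofNat]
  ring

theorem coeff_familyPoly_nonneg {l : ℝ} (hl0 : 0 ≤ l) (hl3 : l ≤ 3) (m : Fin 2 →₀ ℕ) :
    0 ≤ (familyPoly l).coeff m := by
  simp only [familyPoly_eq_sum_monomial, coeff_add, coeff_monomial]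
  split_ifs <;> linarith

theorem coeff_familyPoly_single_four_one (l : ℝ) :
    (familyPoly l).coeff (single 0 4 + single 1 1) = l := by
  simp [familyPoly_eq_sum_monomial, coeff_monomial, Finsupp.ext_iff, Fin.forall_fin_two]

theorem totalDegree_familyPoly_le (l : ℝ) : (familyPoly l).totalDegree ≤ 5 := by
  rw [familyPoly_eq_sum_monomial]
  repeat' apply totalDegree_add_le_of_le
  all_goals exact (totalDegree_monomial_single_add_single_le ..).trans (by norm_num)

theorem totalDegree_familyPoly {l : ℝ} (hl : l ≠ 0) : (familyPoly l).totalDegree = 5 := by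
  refine (totalDegree_familyPoly_le l).antisymm ?_
  have hmem : single 0 4 + single 1 1 ∈ (familyPoly l).support := by
    rwa [MvPolynomial.mem_support_iff, coeff_familyPoly_single_four_one]
  simpa [sum_add_index'] using le_totalDegree hmem

theorem eval_familyPoly (l x y : ℝ) :
    eval ![x, y] (familyPoly l)
      = x ^ 3 + y ^ 3 + (3 - l) * (x * y) + l * (x * y) * (x ^ 3 + 3 * (x * y) + y ^ 3) := by
  simp [familyPoly]

theorem eval_familyPoly_of_add_eq_one (l : ℝ) {x y : ℝ} (h : x + y = 1) :
    eval ![x, y] (familyPoly l) = 1 := by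
  obtain rfl : y = 1 - x := by linarith
  have hcube : x ^ 3 + 3 * (x * (1 - x)) + (1 - x) ^ 3 = 1 := by ring
  rw [eval_familyPoly, hcube]
  ring

/-- For `λ ∈ (0,3]`, the polynomial
`f_λ = x³ + y³ + (3-λ)xy + λ·xy·(x³ + 3xy + y³)` has nonnegative coefficients,
equals `1` on the line `x + y = 1`, has degree `5`, and `f_λ(1,1) = 5 + 4λ`. -/
theorem family_of_degree_five (l : ℝ) (hl0 : 0 < l) (hl3 : l ≤ 3) :
    ∀ f : MvPolynomial (Fin 2) ℝ,
      f = X 0 ^ 3 + X 1 ^ 3 + C (3 - l) * (X 0 * X 1)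
            + C l * (X 0 * X 1) * (X 0 ^ 3 + C 3 * (X 0 * X 1) + X 1 ^ 3) →
      (∀ m, 0 ≤ f.coeff m) ∧
      (∀ x : ℝ, MvPolynomial.eval ![x, 1 - x] f = 1) ∧
      f.totalDegree = 5 ∧
      MvPolynomial.eval ![(1 : ℝ), 1] f = 5 + 4 * l := by
  intro f hf
  obtain rfl : f = familyPoly l := hf
  refine ⟨coeff_familyPoly_nonneg hl0.le hl3,
    fun x => eval_familyPoly_of_add_eq_one l (add_sub_cancel x 1),
    totalDegree_familyPoly hl0.ne', ?_⟩
  rw [eval_familyPoly]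
  ring
end
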